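/- arXiv:2003.11279 — 6 statements merged into one kernel-verified Lean document; each statement's English description precedes it below -/
import Mathlib

section
/- Let (g,B) be a finite-dimensional quadratic Lie algebra over a field of characteristic 0 with a ℤ/2-grading g = k⊕p (i.e. [k,k]⊆k, [k,p]⊆p, [p,p]⊆k) such that k and p are B-orthogonal. Fix a basis {w_k} of k with B-dual basis {w^k}, a basis {z_i} of p with B-dual basis {z^i}, and let {z_i*} ⊂ p* be the dual basis of {z_i}. In U(g)⊗𝒲(p⊕p*,ω) set D⁻ = Σ_i z_i⊗z_i*, D⁺ = Σ_i z_i⊗z^i, let ν : k → 𝒲(p⊕p*,ω) be the Lie algebra homomorphism ν(x) = Σ_i [x,z_i] z_i*, and for x ∈ k set Δ(x) = x⊗1 + 1⊗ν(x). Let Ω(g) = Σ_k w^k w_k + Σ_i z^i z_i ∈ U(g), Ω(k) = Σ_k w^k w_k ∈ U(k), ν(Ω(k)) = Σ_k ν(w_k)ν(w^k), and Δ(Ω(k)) = Σ_k Δ(w_k)Δ(w^k). Then [D⁺,D⁻] = (−Ω(g)+Ω(k))⊗1 − Σ_k w_k⊗ν(w^k), and also [D⁺,D⁻] = (−Ω(g)+(3/2)Ω(k))⊗1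 − (1/2)Δ(Ω(k)) + (1/2)·1⊗ν(Ω(k)). -/
noncomputable section

open scoped TensorProduct

/-- The defining relation of the Weyl algebra of a symplectic form `ω`. -/
def weylRel (R : Type*) [CommRing R] (U : Type*) [AddCommGroup U] [Module R U]
    (ω : U →ₗ[R] U →ₗ[R] R) : TensorAlgebra R U → TensorAlgebra R U → Prop :=
  fun a b => ∃ u w : U,
    a = TensorAlgebra.ι R u * TensorAlgebra.ι R w ∧
    b = TensorAlgebra.ι R w * TensorAlgebra.ι R u + algebraMap R _ (ω u w)

/-- The Weyl algebra of `(U, ω)`. -/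
abbrev WeylAlg (R : Type*) [CommRing R] (U : Type*) [AddCommGroup U] [Module R U]
    (ω : U →ₗ[R] U →ₗ[R] R) := RingQuot (weylRel R U ω)

/-- The canonical linear map `U → 𝒲(U,ω)`. -/
def weylι (R : Type*) [CommRing R] (U : Type*) [AddCommGroup U] [Module R U]
    (ω : U →ₗ[R] U →ₗ[R] R) : U →ₗ[R] WeylAlg R U ω :=
  (RingQuot.mkAlgHom R (weylRel R U ω)).toLinearMap ∘ₗ TensorAlgebra.ι R

/-- The canonical symplectic form on `p ⊕ p*`: `ω(p,p) = ω(p*,p*) = 0`, `ω(α,v) = α(v)`. -/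
def sympForm (R : Type*) [CommRing R] (V : Type*) [AddCommGroup V] [Module R V] :
    (V × Module.Dual R V) →ₗ[R] (V × Module.Dual R V) →ₗ[R] R :=
  LinearMap.mk₂ R (fun u w => u.2 w.1 - w.2 u.1)
    (by intro m₁ m₂ n; simp; ring)
    (by intro c m n; simp; ring)
    (by intro m n₁ n₂; simp; ring)
    (by intro c m n; simp; ring)

/-- The image of a vector `v ∈ p` in the Weyl algebra `𝒲(p ⊕ p*, ω)`. -/
def wVec (R : Type*) [CommRing R] (V : Type*) [AddCommGroup V] [Module R V] (v : V) :
    WeylAlg R (V × Module.Dual R V) (sympForm R V) :=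
  weylι R (V × Module.Dual R V) (sympForm R V) (v, 0)

/-- The image of a functional `φ ∈ p*` in the Weyl algebra `𝒲(p ⊕ p*, ω)`. -/
def wDual (R : Type*) [CommRing R] (V : Type*) [AddCommGroup V] [Module R V]
    (φ : Module.Dual R V) : WeylAlg R (V × Module.Dual R V) (sympForm R V) :=
  weylι R (V × Module.Dual R V) (sympForm R V) (0, φ)

/-!
Expanding both Dirac elements, the Weyl relation `z_i^* z^j = z^j z_i^* + z_i^*(z^j)` splits
`[D⁺, D⁻]` into `Σ_{i,j} [z_i, z_j] ⊗ z^i z_j^*` and `-Σ_{i,j} z_j^*(z^i) z_j z_i ⊗ 1`, which is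
`-(Ω(g) - Ω(k)) ⊗ 1`. In the first sum, invariance of `B` moves the bracket across: expanding
`[w^m, z_j] ∈ p` in the basis `z` and `[z_j, z^l] ∈ k` in the basis `w` produces the same
coefficients `B(w^m, [z_j, z^l])`, which turns the sum into `-Σ_m w_m ⊗ ν(w^m)`.
The second formula follows by expanding `Δ(Ω(k))`: its two cross terms agree, and
`Σ w_m w^m = Σ w^m w_m`, because the Casimir tensor `Σ w_m ⊗ w^m` of a symmetric form is symmetric.
-/

theorem Module.Basis.sum_coord_smul_apply {R V M ι : Type*} [CommRing R] [AddCommGroup V]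
    [Module R V] [AddCommGroup M] [Module R M] [Fintype ι] (b : Module.Basis ι R V)
    (g : V →ₗ[R] M) (x : V) :
    ∑ l, b.coord l x • g (b l) = g x := by
  conv_rhs => rw [← b.sum_repr x]
  simp only [map_sum, map_smul, Module.Basis.coord_apply]

section DualBasis

variable {R V M ι : Type*} [CommRing R] [AddCommGroup V] [Module R V] [AddCommGroup M]
  [Module R M] [DecidableEq ι] {β : V →ₗ[R] V →ₗ[R] R} {b : Module.Basis ι R V}
  {b' : ι → V}

theorem coord_eq_of_dual (hb : ∀ i j, β (b i) (b' j) = if i = j then 1 else 0) (l : ι) (x : V) :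
    b.coord l x = β x (b' l) := by
  suffices b.coord l = β.flip (b' l) from LinearMap.congr_fun this x
  refine b.ext fun m => ?_
  simp [Finsupp.single_apply, hb]

variable [Fintype ι]

theorem apply_eq_sum_dual (hb : ∀ i j, β (b i) (b' j) = if i = j then 1 else 0)
    (g : V →ₗ[R] M) (x : V) : g x = ∑ l, β x (b' l) • g (b l) := by
  simp_rw [← b.sum_coord_smul_apply g x, coord_eq_of_dual hb]

theorem sum_dual_comm (hb : ∀ i j, β (b i) (b' j) = if i = j then 1 else 0)
    (hβ : ∀ x y, β x y = β y x) (f : V →ₗ[R] V →ₗ[R] M) :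
    ∑ i, f (b i) (b' i) = ∑ i, f (b' i) (b i) := by
  simp_rw [apply_eq_sum_dual hb (f _) (b' _), apply_eq_sum_dual hb f (b' _),
    LinearMap.sum_apply, LinearMap.smul_apply]
  rw [Finset.sum_comm]
  simp_rw [hβ]

end DualBasis

section Weyl

variable {R U V : Type*} [CommRing R] [AddCommGroup U] [Module R U] [AddCommGroup V] [Module R V]

theorem weylι_mul_weylι (ω : U →ₗ[R] U →ₗ[R] R) (u v : U) :
    weylι R U ω u * weylι R U ω v = weylι R U ω v * weylι R U ω u + algebraMap R _ (ω u v) := by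
  simpa [weylι] using RingQuot.mkAlgHom_rel R (show weylRel R U ω _ _ from ⟨u, v, rfl, rfl⟩)

theorem wVec_mul_wDual_sub_wDual_mul_wVec (v : V) (φ : Module.Dual R V) :
    wVec R V v * wDual R V φ - wDual R V φ * wVec R V v = -algebraMap R _ (φ v) := by
  rw [wDual, wVec, weylι_mul_weylι (sympForm R V) (0, φ) (v, 0), sub_add_cancel_left]
  simp [sympForm]

def wVecₗ : V →ₗ[R] WeylAlg R (V × Module.Dual R V) (sympForm R V) :=
  weylι R _ (sympForm R V) ∘ₗ LinearMap.inl R V _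

@[simp]
theorem wVecₗ_apply (v : V) : wVecₗ v = wVec R V v := rfl

end Weyl

namespace UniversalEnvelopingAlgebra

attribute [local instance 100] LieRing.ofAssociativeRing

variable (R : Type*) {L : Type*} [CommRing R] [LieRing L] [LieAlgebra R L]

def ιₗ : L →ₗ[R] UniversalEnvelopingAlgebra R L := (ι R).toLinearMap

@[simp]
theorem ιₗ_apply (x : L) : ιₗ R x = ι R x := rfl

theorem ι_lie (x y : L) : ι R ⁅x, y⁆ = ι R x * ι R y - ι R y * ι R x :=
  (ι R).map_lie x y

end UniversalEnvelopingAlgebra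

theorem Algebra.TensorProduct.tmul_mul_tmul_sub_tmul_mul_tmul {R A B : Type*} [CommRing R]
    [Ring A] [Algebra R A] [Ring B] [Algebra R B] (x y : A) (a b : B) :
    (x ⊗ₜ[R] a) * (y ⊗ₜ b) - (y ⊗ₜ b) * (x ⊗ₜ a)
      = (x * y - y * x) ⊗ₜ (a * b) + (y * x) ⊗ₜ (a * b - b * a) := by
  simp only [tmul_mul_tmul, TensorProduct.sub_tmul, TensorProduct.tmul_sub]
  abel

open UniversalEnvelopingAlgebra in
theorem sum_tmul_wVec_commutator_sum_tmul_wDual {R L V n : Type*} [CommRing R] [LieRing L]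
    [LieAlgebra R L] [AddCommGroup V] [Module R V] [Fintype n]
    (u : n → L) (v : n → V) (φ : n → Module.Dual R V) :
    (∑ i, ι R (u i) ⊗ₜ[R] wVec R V (v i)) * (∑ j, ι R (u j) ⊗ₜ[R] wDual R V (φ j))
      - (∑ j, ι R (u j) ⊗ₜ[R] wDual R V (φ j)) * (∑ i, ι R (u i) ⊗ₜ[R] wVec R V (v i))
      = ∑ i, ∑ j, ι R ⁅u i, u j⁆ ⊗ₜ[R] (wVec R V (v i) * wDual R V (φ j))
        - ∑ i, ∑ j, φ j (v i) • ((ι R (u j) * ι R (u i)) ⊗ₜ[R] 1) := by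
  rw [Fintype.sum_mul_sum, Fintype.sum_mul_sum]
  nth_rw 2 [Finset.sum_comm]
  simp only [← Finset.sum_sub_distrib]
  refine Finset.sum_congr rfl fun i _ => Finset.sum_congr rfl fun j _ => ?_
  rw [Algebra.TensorProduct.tmul_mul_tmul_sub_tmul_mul_tmul, ← ι_lie,
    wVec_mul_wDual_sub_wDual_mul_wVec, Algebra.algebraMap_eq_smul_one, TensorProduct.tmul_neg,
    TensorProduct.tmul_smul, sub_eq_add_neg]

section GradedQuadratic

open UniversalEnvelopingAlgebra

variable {𝕜 L : Type*} [CommRing 𝕜] [LieRing L] [LieAlgebra 𝕜 L] {k p : Submodule 𝕜 L}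

def lieRightOfMem (hkp : ∀ x ∈ k, ∀ y ∈ p, ⁅x, y⁆ ∈ p) (v : p) : k →ₗ[𝕜] p where
  toFun x := ⟨⁅(x : L), (v : L)⁆, hkp _ x.2 _ v.2⟩
  map_add' _ _ := Subtype.ext (add_lie _ _ _)
  map_smul' _ _ := Subtype.ext (smul_lie _ _ _)

def nuₗ (hkp : ∀ x ∈ k, ∀ y ∈ p, ⁅x, y⁆ ∈ p) {ιp : Type*} [Fintype ιp]
    (z : Module.Basis ιp 𝕜 p) : k →ₗ[𝕜] WeylAlg 𝕜 (p × Module.Dual 𝕜 p) (sympForm 𝕜 p) :=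
  ∑ i, LinearMap.mulRight 𝕜 (wDual 𝕜 p (z.coord i)) ∘ₗ wVecₗ ∘ₗ lieRightOfMem hkp (z i)

theorem nuₗ_apply (hkp : ∀ x ∈ k, ∀ y ∈ p, ⁅x, y⁆ ∈ p) {ιp : Type*} [Fintype ιp]
    (z : Module.Basis ιp 𝕜 p) (x : k) :
    nuₗ hkp z x = ∑ i,
      wVec 𝕜 p ⟨⁅(x : L), (z i : L)⁆, hkp _ x.2 _ (z i).2⟩ * wDual 𝕜 p (z.coord i) := by
  simp [nuₗ, lieRightOfMem]

theorem sum_coord_smul_mul_tmul_one {n A : Type*} [Fintype n] [Ring A] [Algebra 𝕜 A]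
    (z : Module.Basis n 𝕜 p) (x : n → p) :
    ∑ i, ∑ j, z.coord j (x i) • ((ι 𝕜 (z j : L) * ι 𝕜 (z i : L)) ⊗ₜ[𝕜] (1 : A))
      = (∑ i, ι 𝕜 (x i : L) * ι 𝕜 (z i : L)) ⊗ₜ[𝕜] 1 := by
  rw [TensorProduct.sum_tmul]
  exact Finset.sum_congr rfl fun i _ => z.sum_coord_smul_apply ((TensorProduct.mk 𝕜 _ A).flip 1
    ∘ₗ LinearMap.mulRight 𝕜 (ι 𝕜 (z i : L)) ∘ₗ ιₗ 𝕜 ∘ₗ p.subtype) (x i)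

variable {B : L →ₗ[𝕜] L →ₗ[𝕜] 𝕜} {ιk ιp : Type*} [Fintype ιk] [Fintype ιp]
  [DecidableEq ιk] [DecidableEq ιp] {w : Module.Basis ιk 𝕜 k} {w' : ιk → k}
  {z : Module.Basis ιp 𝕜 p} {z' : ιp → p}

theorem sum_lie_dual_eq (hBsymm : ∀ x y, B x y = B y x) (hBinv : ∀ x y z, B ⁅x, y⁆ z = B x ⁅y, z⁆)
    (hkp : ∀ x ∈ k, ∀ y ∈ p, ⁅x, y⁆ ∈ p) (hpp : ∀ x ∈ p, ∀ y ∈ p, ⁅x, y⁆ ∈ k)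
    (hw : ∀ i j, B ((w i : L)) ((w' j : L)) = if i = j then 1 else 0)
    (hz : ∀ i j, B ((z i : L)) ((z' j : L)) = if i = j then 1 else 0)
    {M : Type*} [AddCommGroup M] [Module 𝕜 M] (F : L →ₗ[𝕜] p →ₗ[𝕜] M) (y : p) :
    ∑ m, F (w m) (lieRightOfMem hkp y (w' m)) = ∑ l, F ⁅(y : L), (z l : L)⁆ (z' l) := by
  let βk := B.compl₁₂ k.subtype k.subtype
  let βp := B.compl₁₂ p.subtype p.subtype
  calc ∑ m, F (w m) (lieRightOfMem hkp y (w' m))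
      = ∑ m, ∑ l, B ⁅(w' m : L), (y : L)⁆ (z' l) • F (w m) (z l) :=
        Finset.sum_congr rfl fun m _ => apply_eq_sum_dual (β := βp) hz (F (w m)) _
    _ = ∑ l, ∑ m, B ⁅(y : L), (z' l : L)⁆ (w' m) • F (w m) (z l) := by
        rw [Finset.sum_comm]
        refine Finset.sum_congr rfl fun l _ => Finset.sum_congr rfl fun m _ => ?_
        rw [hBinv, hBsymm]
    _ = ∑ l, F ⁅(y : L), (z' l : L)⁆ (z l) :=
        Finset.sum_congr rfl fun l _ => (apply_eq_sum_dual (β := βk) hw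
          (F.flip (z l) ∘ₗ k.subtype) ⟨_, hpp _ y.2 _ (z' l).2⟩).symm
    _ = ∑ l, F ⁅(y : L), (z l : L)⁆ (z' l) :=
        sum_dual_comm (β := βp) hz (fun _ _ => hBsymm _ _)
          (F ∘ₗ LieAlgebra.ad 𝕜 L y ∘ₗ p.subtype).flip

theorem sum_lie_tmul_eq_neg_sum_tmul_nuₗ (hBsymm : ∀ x y, B x y = B y x)
    (hBinv : ∀ x y z, B ⁅x, y⁆ z = B x ⁅y, z⁆)
    (hkp : ∀ x ∈ k, ∀ y ∈ p, ⁅x, y⁆ ∈ p) (hpp : ∀ x ∈ p, ∀ y ∈ p, ⁅x, y⁆ ∈ k)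
    (hw : ∀ i j, B ((w i : L)) ((w' j : L)) = if i = j then 1 else 0)
    (hz : ∀ i j, B ((z i : L)) ((z' j : L)) = if i = j then 1 else 0) :
    ∑ i, ∑ j, ι 𝕜 ⁅(z i : L), (z j : L)⁆ ⊗ₜ[𝕜] (wVec 𝕜 p (z' i) * wDual 𝕜 p (z.coord j))
      = -∑ m, ι 𝕜 (w m : L) ⊗ₜ[𝕜] nuₗ hkp z (w' m) := by
  let F (j : ιp) : L →ₗ[𝕜] p →ₗ[𝕜]
      UniversalEnvelopingAlgebra 𝕜 L ⊗[𝕜] WeylAlg 𝕜 (p × Module.Dual 𝕜 p) (sympForm 𝕜 p) :=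
    (TensorProduct.mk 𝕜 _ _).compl₁₂ (ιₗ 𝕜)
      (LinearMap.mulRight 𝕜 (wDual 𝕜 p (z.coord j)) ∘ₗ wVecₗ)
  have hF (j : ιp) (x : L) (v : p) :
      F j x v = ι 𝕜 x ⊗ₜ[𝕜] (wVec 𝕜 p v * wDual 𝕜 p (z.coord j)) := rfl
  calc ∑ i, ∑ j, ι 𝕜 ⁅(z i : L), (z j : L)⁆ ⊗ₜ[𝕜] (wVec 𝕜 p (z' i) * wDual 𝕜 p (z.coord j))
      = ∑ j, ∑ i, -F j ⁅(z j : L), (z i : L)⁆ (z' i) := by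
        rw [Finset.sum_comm]
        refine Finset.sum_congr rfl fun j _ => Finset.sum_congr rfl fun i _ => ?_
        rw [hF, ← lie_skew, map_neg, TensorProduct.neg_tmul]
    _ = -∑ j, ∑ m, F j (w m) (lieRightOfMem hkp (z j) (w' m)) := by
        simp_rw [Finset.sum_neg_distrib, sum_lie_dual_eq hBsymm hBinv hkp hpp hw hz]
    _ = -∑ m, ι 𝕜 (w m : L) ⊗ₜ[𝕜] nuₗ hkp z (w' m) := by
        simp only [Finset.sum_comm (γ := ιp), hF, nuₗ_apply, TensorProduct.tmul_sum]
        rfl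

theorem sum_tmul_one_add_one_tmul_mul (hBsymm : ∀ x y, B x y = B y x)
    (hw : ∀ i j, B ((w i : L)) ((w' j : L)) = if i = j then 1 else 0)
    {C : Type*} [Ring C] [Algebra 𝕜 C] (N : k →ₗ[𝕜] C) :
    ∑ m, (ι 𝕜 (w m : L) ⊗ₜ[𝕜] 1 + 1 ⊗ₜ[𝕜] N (w m))
        * (ι 𝕜 (w' m : L) ⊗ₜ[𝕜] 1 + 1 ⊗ₜ[𝕜] N (w' m))
      = (∑ m, ι 𝕜 (w' m : L) * ι 𝕜 (w m : L)) ⊗ₜ[𝕜] 1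
        + (2 : 𝕜) • ∑ m, ι 𝕜 (w m : L) ⊗ₜ[𝕜] N (w' m) + 1 ⊗ₜ[𝕜] ∑ m, N (w m) * N (w' m) := by
  let βk := B.compl₁₂ k.subtype k.subtype
  have hsymm : ∀ x y, βk x y = βk y x := fun _ _ => hBsymm _ _
  have hΩ := sum_dual_comm (β := βk) hw hsymm
    ((LinearMap.mul 𝕜 _).compl₁₂ (ιₗ 𝕜 ∘ₗ k.subtype) (ιₗ 𝕜 ∘ₗ k.subtype))
  have hcross := sum_dual_comm (β := βk) hw hsymm
    ((TensorProduct.mk 𝕜 _ C).compl₁₂ (ιₗ 𝕜 ∘ₗ k.subtype) N)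
  simp only [LinearMap.compl₁₂_apply, LinearMap.comp_apply, ιₗ_apply, Submodule.subtype_apply,
    LinearMap.mul_apply', TensorProduct.mk_apply] at hΩ hcross
  simp only [add_mul, mul_add, Algebra.TensorProduct.tmul_mul_tmul, one_mul, mul_one,
    Finset.sum_add_distrib, ← TensorProduct.sum_tmul, ← TensorProduct.tmul_sum]
  rw [← hΩ, ← hcross, two_smul]
  abel

end GradedQuadratic

theorem statement1_general
    (𝕜 : Type*) [Field 𝕜] [CharZero 𝕜]
    (L : Type*) [LieRing L] [LieAlgebra 𝕜 L]
    (B : L →ₗ[𝕜] L →ₗ[𝕜] 𝕜)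
    (hBsymm : ∀ x y, B x y = B y x)
    (hBinv : ∀ x y z, B ⁅x, y⁆ z = B x ⁅y, z⁆)
    (k p : Submodule 𝕜 L)
    (hkp : ∀ x ∈ k, ∀ y ∈ p, ⁅x, y⁆ ∈ p)
    (hpp : ∀ x ∈ p, ∀ y ∈ p, ⁅x, y⁆ ∈ k)
    -- bases `{w_k}` of `k` and `{z_i}` of `p`, with their `B`-dual bases
    (ιk ιp : Type) [Fintype ιk] [Fintype ιp] [DecidableEq ιk] [DecidableEq ιp]
    (w : Module.Basis ιk 𝕜 ↥k) (w' : ιk → ↥k)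
    (hw : ∀ i j, B ((w i : L)) ((w' j : L)) = if i = j then 1 else 0)
    (z : Module.Basis ιp 𝕜 ↥p) (z' : ιp → ↥p)
    (hz : ∀ i j, B ((z i : L)) ((z' j : L)) = if i = j then 1 else 0)
    -- the Lie algebra map `ν : k → 𝒲(p⊕p*,ω)`, `ν(x) = Σ_i [x,z_i] z_i*`
    (ν : ↥k → WeylAlg 𝕜 (↥p × Module.Dual 𝕜 ↥p) (sympForm 𝕜 ↥p))
    (hν : ∀ x : ↥k, ν x = ∑ i,
      wVec 𝕜 ↥p ⟨⁅(x : L), (z i : L)⁆, hkp _ x.2 _ (z i).2⟩ * wDual 𝕜 ↥p (z.coord i))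
    -- the symplectic Dirac elements
    (Dp Dm : UniversalEnvelopingAlgebra 𝕜 L ⊗[𝕜]
      WeylAlg 𝕜 (↥p × Module.Dual 𝕜 ↥p) (sympForm 𝕜 ↥p))
    (hDm : Dm = ∑ i, UniversalEnvelopingAlgebra.ι 𝕜 (z i : L) ⊗ₜ[𝕜] wDual 𝕜 ↥p (z.coord i))
    (hDp : Dp = ∑ i, UniversalEnvelopingAlgebra.ι 𝕜 (z i : L) ⊗ₜ[𝕜] wVec 𝕜 ↥p (z' i))
    -- the Casimir elements
    (Ωg Ωk : UniversalEnvelopingAlgebra 𝕜 L)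
    (hΩg : Ωg = ∑ j, UniversalEnvelopingAlgebra.ι 𝕜 (w' j : L) *
        UniversalEnvelopingAlgebra.ι 𝕜 (w j : L)
      + ∑ i, UniversalEnvelopingAlgebra.ι 𝕜 (z' i : L) *
        UniversalEnvelopingAlgebra.ι 𝕜 (z i : L))
    (hΩk : Ωk = ∑ j, UniversalEnvelopingAlgebra.ι 𝕜 (w' j : L) *
        UniversalEnvelopingAlgebra.ι 𝕜 (w j : L))
    (νΩk : WeylAlg 𝕜 (↥p × Module.Dual 𝕜 ↥p) (sympForm 𝕜 ↥p))
    (hνΩk : νΩk = ∑ j, ν (w j) * ν (w' j))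
    -- the diagonal embedding `Δ(x) = x⊗1 + 1⊗ν(x)` and `Δ(Ω(k))`
    (Δ : ↥k → UniversalEnvelopingAlgebra 𝕜 L ⊗[𝕜]
      WeylAlg 𝕜 (↥p × Module.Dual 𝕜 ↥p) (sympForm 𝕜 ↥p))
    (hΔ : ∀ x : ↥k, Δ x = UniversalEnvelopingAlgebra.ι 𝕜 (x : L) ⊗ₜ[𝕜] 1 + 1 ⊗ₜ[𝕜] ν x)
    (ΔΩk : UniversalEnvelopingAlgebra 𝕜 L ⊗[𝕜]
      WeylAlg 𝕜 (↥p × Module.Dual 𝕜 ↥p) (sympForm 𝕜 ↥p))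
    (hΔΩk : ΔΩk = ∑ j, Δ (w j) * Δ (w' j)) :
    Dp * Dm - Dm * Dp
      = (-Ωg + Ωk) ⊗ₜ[𝕜] 1 - ∑ j, UniversalEnvelopingAlgebra.ι 𝕜 (w j : L) ⊗ₜ[𝕜] ν (w' j) ∧
    Dp * Dm - Dm * Dp
      = (-Ωg + (3 / 2 : 𝕜) • Ωk) ⊗ₜ[𝕜] 1 - (1 / 2 : 𝕜) • ΔΩk + (1 / 2 : 𝕜) • (1 ⊗ₜ[𝕜] νΩk) := by
  obtain rfl : ν = nuₗ hkp z := funext fun x => by rw [hν, nuₗ_apply]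
  have hcomm : Dp * Dm - Dm * Dp = (-Ωg + Ωk) ⊗ₜ[𝕜] 1
      - ∑ j, UniversalEnvelopingAlgebra.ι 𝕜 (w j : L) ⊗ₜ[𝕜] nuₗ hkp z (w' j) := by
    rw [hDp, hDm, sum_tmul_wVec_commutator_sum_tmul_wDual,
      sum_lie_tmul_eq_neg_sum_tmul_nuₗ hBsymm hBinv hkp hpp hw hz, sum_coord_smul_mul_tmul_one,
      show -Ωg + Ωk = -(Ωg - Ωk) by abel, hΩg, hΩk, add_sub_cancel_left, TensorProduct.neg_tmul]
    abel
  have hΔΩk' : ΔΩk = Ωk ⊗ₜ[𝕜] 1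
      + (2 : 𝕜) • ∑ j, UniversalEnvelopingAlgebra.ι 𝕜 (w j : L) ⊗ₜ[𝕜] nuₗ hkp z (w' j)
      + 1 ⊗ₜ[𝕜] νΩk := by
    simp only [hΔΩk, hΔ, hνΩk, hΩk]
    exact sum_tmul_one_add_one_tmul_mul hBsymm hw _
  refine ⟨hcomm, ?_⟩
  rw [hcomm, hΔΩk']
  simp only [TensorProduct.add_tmul, TensorProduct.neg_tmul, ← TensorProduct.smul_tmul']
  module

/-- For a `ℤ/2`-graded quadratic Lie algebra `g = k ⊕ p`, in
`U(g) ⊗ 𝒲(p⊕p*,ω)` one has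
`[D⁺,D⁻] = (−Ω(g)+Ω(k))⊗1 − Σ_k w_k⊗ν(w^k)`
`        = (−Ω(g)+(3/2)Ω(k))⊗1 − (1/2)Δ(Ω(k)) + (1/2)·1⊗ν(Ω(k))`. -/
theorem statement1
    (𝕜 : Type*) [Field 𝕜] [CharZero 𝕜]
    (L : Type*) [LieRing L] [LieAlgebra 𝕜 L] [FiniteDimensional 𝕜 L]
    (B : L →ₗ[𝕜] L →ₗ[𝕜] 𝕜)
    (hBsymm : ∀ x y, B x y = B y x)
    (hBnondeg : ∀ x, (∀ y, B x y = 0) → x = 0)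
    (hBinv : ∀ x y z, B ⁅x, y⁆ z = B x ⁅y, z⁆)
    (k p : Submodule 𝕜 L) (hcompl : IsCompl k p)
    (hkk : ∀ x ∈ k, ∀ y ∈ k, ⁅x, y⁆ ∈ k)
    (hkp : ∀ x ∈ k, ∀ y ∈ p, ⁅x, y⁆ ∈ p)
    (hpp : ∀ x ∈ p, ∀ y ∈ p, ⁅x, y⁆ ∈ k)
    (horth : ∀ x ∈ k, ∀ y ∈ p, B x y = 0)
    -- bases `{w_k}` of `k` and `{z_i}` of `p`, with their `B`-dual bases
    (ιk ιp : Type) [Fintype ιk] [Fintype ιp] [DecidableEq ιk] [DecidableEq ιp]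
    (w : Module.Basis ιk 𝕜 ↥k) (w' : ιk → ↥k)
    (hw : ∀ i j, B ((w i : L)) ((w' j : L)) = if i = j then 1 else 0)
    (z : Module.Basis ιp 𝕜 ↥p) (z' : ιp → ↥p)
    (hz : ∀ i j, B ((z i : L)) ((z' j : L)) = if i = j then 1 else 0)
    -- the Lie algebra map `ν : k → 𝒲(p⊕p*,ω)`, `ν(x) = Σ_i [x,z_i] z_i*`
    (ν : ↥k → WeylAlg 𝕜 (↥p × Module.Dual 𝕜 ↥p) (sympForm 𝕜 ↥p))
    (hν : ∀ x : ↥k, ν x = ∑ i,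
      wVec 𝕜 ↥p ⟨⁅(x : L), (z i : L)⁆, hkp _ x.2 _ (z i).2⟩ * wDual 𝕜 ↥p (z.coord i))
    -- the symplectic Dirac elements
    (Dp Dm : UniversalEnvelopingAlgebra 𝕜 L ⊗[𝕜]
      WeylAlg 𝕜 (↥p × Module.Dual 𝕜 ↥p) (sympForm 𝕜 ↥p))
    (hDm : Dm = ∑ i, UniversalEnvelopingAlgebra.ι 𝕜 (z i : L) ⊗ₜ[𝕜] wDual 𝕜 ↥p (z.coord i))
    (hDp : Dp = ∑ i, UniversalEnvelopingAlgebra.ι 𝕜 (z i : L) ⊗ₜ[𝕜] wVec 𝕜 ↥p (z' i))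
    -- the Casimir elements
    (Ωg Ωk : UniversalEnvelopingAlgebra 𝕜 L)
    (hΩg : Ωg = ∑ j, UniversalEnvelopingAlgebra.ι 𝕜 (w' j : L) *
        UniversalEnvelopingAlgebra.ι 𝕜 (w j : L)
      + ∑ i, UniversalEnvelopingAlgebra.ι 𝕜 (z' i : L) *
        UniversalEnvelopingAlgebra.ι 𝕜 (z i : L))
    (hΩk : Ωk = ∑ j, UniversalEnvelopingAlgebra.ι 𝕜 (w' j : L) *
        UniversalEnvelopingAlgebra.ι 𝕜 (w j : L))
    (νΩk : WeylAlg 𝕜 (↥p × Module.Dual 𝕜 ↥p) (sympForm 𝕜 ↥p))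
    (hνΩk : νΩk = ∑ j, ν (w j) * ν (w' j))
    -- the diagonal embedding `Δ(x) = x⊗1 + 1⊗ν(x)` and `Δ(Ω(k))`
    (Δ : ↥k → UniversalEnvelopingAlgebra 𝕜 L ⊗[𝕜]
      WeylAlg 𝕜 (↥p × Module.Dual 𝕜 ↥p) (sympForm 𝕜 ↥p))
    (hΔ : ∀ x : ↥k, Δ x = UniversalEnvelopingAlgebra.ι 𝕜 (x : L) ⊗ₜ[𝕜] 1 + 1 ⊗ₜ[𝕜] ν x)
    (ΔΩk : UniversalEnvelopingAlgebra 𝕜 L ⊗[𝕜]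
      WeylAlg 𝕜 (↥p × Module.Dual 𝕜 ↥p) (sympForm 𝕜 ↥p))
    (hΔΩk : ΔΩk = ∑ j, Δ (w j) * Δ (w' j)) :
    Dp * Dm - Dm * Dp
      = (-Ωg + Ωk) ⊗ₜ[𝕜] 1 - ∑ j, UniversalEnvelopingAlgebra.ι 𝕜 (w j : L) ⊗ₜ[𝕜] ν (w' j) ∧
    Dp * Dm - Dm * Dp
      = (-Ωg + (3 / 2 : 𝕜) • Ωk) ⊗ₜ[𝕜] 1 - (1 / 2 : 𝕜) • ΔΩk + (1 / 2 : 𝕜) • (1 ⊗ₜ[𝕜] νΩk) :=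
  statement1_general 𝕜 L B hBsymm hBinv k p hkp hpp ιk ιp w w' hw z z' hz ν hν Dp Dm hDm hDp Ωg Ωk
    hΩg hΩk νΩk hνΩk Δ hΔ ΔΩk hΔΩk
end
end

section
/- In the setting below, for every x ∈ M(σ)⊗1 ⊂ M⊗𝒫 one has ⟨D⁺x, D⁺x⟩_{M⊗𝒫} = (−χ + σ(Ω(k)))·⟨x,x⟩_{M⊗𝒫}. Consequently, if the hermitian form on M is positive definite and M(σ) ≠ 0, then χ ≤ σ(Ω(k)). -/
/-!
On `m ⊗ 1` the operator `D⁺` produces `∑ᵢ zᵢ·m ⊗ zᵢ`, and the degree-one monomials `zᵢ` are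
orthonormal for the Fischer form, so `⟨D⁺(m ⊗ 1), D⁺(m ⊗ 1)⟩ = ∑ᵢ ⟨zᵢ·m, zᵢ·m⟩`. Real elements act
skew-adjointly, so this equals `-⟨m, (∑ᵢ zᵢ²)·m⟩`, and `∑ᵢ zᵢ² = Ω(g) - Ω(k)`. On `M(σ)` the Casimir
`Ω(k)` acts by `σ(Ω(k))`, because every intertwiner `σ → M` carries its action on `σ` to `M`; hence
`∑ᵢ zᵢ²` acts by `χ - σ(Ω(k))`. If the form is positive definite, the left-hand side is a sum of
nonnegative terms, and comparing with `⟨m, m⟩ > 0` for some `m ≠ 0` in `M(σ)` gives `χ ≤ σ(Ω(k))`.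
-/

noncomputable section

open scoped TensorProduct ComplexOrder

attribute [local instance 100] LieRing.ofAssociativeRing

theorem Complex.nonneg_of_mul_nonneg_left {a b : ℂ} (h : 0 ≤ a * b) (hb : 0 < b) : 0 ≤ a := by
  simpa [hb.ne'] using mul_nonneg h (inv_pos.mpr hb).le

section Isotypic

variable {R K V M ι : Type*} [CommRing R] [AddCommGroup V] [Module R V]
  [AddCommGroup M] [Module R M] [Fintype ι] (ρ : K → Module.End R V) (π : K → Module.End R M)

theorem comp_sum_mul_eq_of_intertwines {f : V →ₗ[R] M} (hf : ∀ x s, f (ρ x s) = π x (f s))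
    (a b : ι → K) :
    f ∘ₗ (∑ j, ρ (a j) * ρ (b j)) = (∑ j, π (a j) * π (b j)) ∘ₗ f := by
  ext s
  simp [map_sum, hf]

theorem sSup_range_intertwiners_le_eigenspace (a b : ι → K) {c : R}
    (hρ : ∑ j, ρ (a j) * ρ (b j) = c • 1) :
    sSup {N : Submodule R M | ∃ f : V →ₗ[R] M,
      (∀ x s, f (ρ x s) = π x (f s)) ∧ N = LinearMap.range f}
      ≤ (∑ j, π (a j) * π (b j)).eigenspace c := by
  refine sSup_le ?_
  rintro _ ⟨f, hf, rfl⟩ _ ⟨s, rfl⟩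
  rw [Module.End.mem_eigenspace_iff, ← LinearMap.comp_apply,
    ← comp_sum_mul_eq_of_intertwines ρ π hf, hρ]
  simp

end Isotypic

theorem sum_apply_self_eq_neg_apply_sum_mul {R M ι : Type*} [CommRing R] [AddCommGroup M]
    [Module R M] [Fintype ι] {τ : R →+* R} (FM : M →ₛₗ[τ] M →ₗ[R] R)
    (X : ι → Module.End R M) (hskew : ∀ i m m', FM (X i m) m' = -FM m (X i m')) (m : M) :
    ∑ i, FM (X i m) (X i m) = -FM m ((∑ i, X i * X i) m) := by
  simp [hskew, map_sum]

theorem apply_sum_tmul_sum_tmul_of_orthonormal {R M P ι : Type*} [CommRing R]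
    [AddCommGroup M] [Module R M] [AddCommGroup P] [Module R P] [Fintype ι] [DecidableEq ι]
    {τ : R →+* R} {F : M ⊗[R] P →ₛₗ[τ] M ⊗[R] P →ₗ[R] R} {FM : M → M → R} {FP : P → P → R}
    (hF : ∀ m m' q q', F (m ⊗ₜ q) (m' ⊗ₜ q') = FM m m' * FP q q')
    {q : ι → P} (hq : ∀ i j, FP (q i) (q j) = if i = j then 1 else 0) (a b : ι → M) :
    F (∑ i, a i ⊗ₜ q i) (∑ i, b i ⊗ₜ q i) = ∑ i, FM (a i) (b i) := by
  simp [map_sum, hF, hq]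

section Fischer

variable {σ : Type*} [Fintype σ] [DecidableEq σ]

def IsFischerForm (FP : MvPolynomial σ ℂ →ₛₗ[starRingEnd ℂ] MvPolynomial σ ℂ →ₗ[ℂ] ℂ) : Prop :=
  ∀ (d d' : σ →₀ ℕ) (c c' : ℂ), FP (MvPolynomial.monomial d c) (MvPolynomial.monomial d' c')
    = if d = d' then (∏ i, ((d i).factorial : ℂ)) * starRingEnd ℂ c * c' else 0

variable {FP : MvPolynomial σ ℂ →ₛₗ[starRingEnd ℂ] MvPolynomial σ ℂ →ₗ[ℂ] ℂ}

theorem IsFischerForm.one_one (hFP : IsFischerForm FP) : FP 1 1 = 1 := by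
  simpa using hFP 0 0 1 1

theorem IsFischerForm.X_X (hFP : IsFischerForm FP) (i j : σ) :
    FP (MvPolynomial.X i) (MvPolynomial.X j) = if i = j then 1 else 0 := by
  have hfact : ∀ x, ((Finsupp.single i 1 x).factorial : ℂ) = 1 := fun x => by
    rw [Finsupp.single_apply]; split_ifs <;> simp
  rw [MvPolynomial.X, MvPolynomial.X, hFP]
  simp [hfact, Finsupp.single_left_inj one_ne_zero]

end Fischer

section Statement5

variable (L : Type*) [LieRing L] [LieAlgebra ℂ L] [FiniteDimensional ℂ L]

theorem statement5
    -- `g = k ⊕ p`, a quadratic Lie algebra which is the complexification of a real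
    -- Lie algebra `g₀ = k₀ ⊕ p₀`; `cj` is the complex conjugation fixing `g₀`
    (cj : L → L)
    (k : Submodule ℂ L)
    -- a basis `{w_k}` of `k` with `B`-dual basis `{w^k}`
    (ιk : Type) [Fintype ιk]
    (w : Module.Basis ιk ℂ ↥k) (w' : ιk → ↥k)
    -- an orthonormal basis `{z_i}` of `(p₀, B)` (so `z^i = z_i`)
    (nn : ℕ) (z : Fin nn → L)
    (hzreal : ∀ i, cj (z i) = z i)
    -- `(π, M)`: a `g`-module with a hermitian form `⟨u·m,m'⟩ = ⟨m,u*·m'⟩`, `x* = −x̄`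
    (M : Type*) [AddCommGroup M] [Module ℂ M]
    (π : L →ₗ⁅ℂ⁆ Module.End ℂ M)
    (FM : M →ₛₗ[starRingEnd ℂ] M →ₗ[ℂ] ℂ)
    (hFMinv : ∀ (x : L) (m m' : M), FM (π x m) m' = - FM m (π (cj x) m'))
    -- `Ω(g)` acts on `M` by the scalar `χ`
    (χ : ℂ)
    (hχ : (∑ j, π ((w' j : L)) * π ((w j : L))) + (∑ i, π (z i) * π (z i))
      = χ • (1 : Module.End ℂ M))
    -- `σ`: a simple finite-dimensional `k`-module on which `Ω(k)` acts by `σ(Ω(k))`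
    (σV : Type*) [AddCommGroup σV] [Module ℂ σV]
    (ρ : ↥k →ₗ[ℂ] Module.End ℂ σV)
    (σΩ : ℂ)
    (hσΩ : (∑ j, ρ (w' j) * ρ (w j)) = σΩ • (1 : Module.End ℂ σV))
    -- `M(σ)`: the `σ`-isotypic component of `M`
    (Mσ : Submodule ℂ M)
    (hMσ : Mσ = sSup {N : Submodule ℂ M | ∃ f : σV →ₗ[ℂ] M,
      (∀ (x : ↥k) (s : σV), f (ρ x s) = π (x : L) (f s)) ∧ N = LinearMap.range f})
    -- `𝒫 = S(p)`, realized as polynomials in the orthonormal basis `{z_i}`, with the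
    -- hermitian inner product `⟨P₁,P₂⟩ = (∂_{P₂}(conj P₁))(0)`
    (FP : MvPolynomial (Fin nn) ℂ →ₛₗ[starRingEnd ℂ] MvPolynomial (Fin nn) ℂ →ₗ[ℂ] ℂ)
    (hFP : ∀ (d d' : Fin nn →₀ ℕ) (c c' : ℂ),
      FP (MvPolynomial.monomial d c) (MvPolynomial.monomial d' c')
        = if d = d' then (∏ i, ((d i).factorial : ℂ)) * starRingEnd ℂ c * c' else 0)
    -- the product hermitian form on `M ⊗ 𝒫`
    (F : M ⊗[ℂ] MvPolynomial (Fin nn) ℂ →ₛₗ[starRingEnd ℂ]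
      M ⊗[ℂ] MvPolynomial (Fin nn) ℂ →ₗ[ℂ] ℂ)
    (hF : ∀ (m m' : M) (q q' : MvPolynomial (Fin nn) ℂ),
      F (m ⊗ₜ[ℂ] q) (m' ⊗ₜ[ℂ] q') = FM m m' * FP q q')
    -- the symplectic Dirac operators on `M ⊗ 𝒫`
    (Dp : M ⊗[ℂ] MvPolynomial (Fin nn) ℂ →ₗ[ℂ] M ⊗[ℂ] MvPolynomial (Fin nn) ℂ)
    (hDp : Dp = ∑ i, TensorProduct.map (π (z i)) (LinearMap.mulLeft ℂ (MvPolynomial.X i))) :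
    (∀ m ∈ Mσ,
      F (Dp (m ⊗ₜ[ℂ] 1)) (Dp (m ⊗ₜ[ℂ] 1))
        = (-χ + σΩ) * F (m ⊗ₜ[ℂ] 1) (m ⊗ₜ[ℂ] 1)) ∧
    ((∀ m : M, m ≠ 0 → 0 < FM m m) → Mσ ≠ ⊥ → χ ≤ σΩ) := by
  have hF1 : ∀ m, F (m ⊗ₜ 1) (m ⊗ₜ 1) = FM m m := by simp [hF, IsFischerForm.one_one hFP]
  have hnorm : ∀ m, F (Dp (m ⊗ₜ 1)) (Dp (m ⊗ₜ 1)) = ∑ i, FM (π (z i) m) (π (z i) m) := by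
    intro m
    have hDp1 : Dp (m ⊗ₜ 1) = ∑ i, π (z i) m ⊗ₜ MvPolynomial.X i := by simp [hDp]
    rw [hDp1]
    exact apply_sum_tmul_sum_tmul_of_orthonormal hF (IsFischerForm.X_X hFP) _ _
  have hΩk : ∀ m ∈ Mσ, (∑ j, π (w' j : L) * π (w j : L)) m = σΩ • m := fun m hm =>
    Module.End.mem_eigenspace_iff.mp
      (sSup_range_intertwiners_le_eigenspace ρ (fun x => π x) w' w hσΩ (hMσ ▸ hm))
  have hmain : ∀ m ∈ Mσ, F (Dp (m ⊗ₜ 1)) (Dp (m ⊗ₜ 1)) = (-χ + σΩ) * F (m ⊗ₜ 1) (m ⊗ₜ 1) := by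
    intro m hm
    have hsq : (∑ i, π (z i) * π (z i)) m = χ • m - σΩ • m := by
      rw [eq_sub_of_add_eq' hχ, LinearMap.sub_apply, hΩk m hm]
      rfl
    rw [hnorm, hF1, sum_apply_self_eq_neg_apply_sum_mul FM _ (fun i => by simp [hFMinv, hzreal]),
      hsq]
    simp only [map_sub, map_smul, smul_eq_mul]
    ring
  refine ⟨hmain, fun hpos hne => ?_⟩
  obtain ⟨m, hm, hm0⟩ := Submodule.exists_mem_ne_zero_of_ne_bot hne
  have hnonneg : 0 ≤ (-χ + σΩ) * FM m m := by
    rw [← hF1, ← hmain m hm, hnorm]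
    refine Finset.sum_nonneg fun i _ => ?_
    by_cases h : π (z i) m = 0
    · simp [h]
    · exact (hpos _ h).le
  simpa [neg_add_eq_sub] using Complex.nonneg_of_mul_nonneg_left hnonneg (hpos m hm0)

end Statement5

end
end

section
/- Let n ≥ 1 and let V_n be the (n+1)-dimensional complex vector space with basis W_0,…,W_n. Define linear operators π(X)W_k = (n−k)W_{k+1} and π(Y)W_k = k·W_{k−1} (with W_{−1} = W_{n+1} = 0). On V_n⊗ℂ[X,Y] define D⁺ = 2π(X)⊗M_Y + 2π(Y)⊗M_X, where M_X, M_Y denote multiplication by X, Y. If n is odd, then D⁺ is injective. -/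
/-!
Write `z ∈ V_n ⊗ ℂ[X,Y]` as `∑ W_k ⊗ f_k`. The `W_j`-component of `D⁺ z` is
`2 ((n + 1 - j) Y f_{j-1} + (j + 1) X f_{j+1})`. Since `ℂ[X,Y]` is a domain, `D⁺ z = 0` kills
`f_1, f_3, f_5, …` one after the other starting from `f_{-1} = 0`, and `f_{n-1}, f_{n-3}, …`
starting from `f_{n+1} = 0`. For odd `n` these two chains cover every index `0 ≤ k ≤ n`.
-/

noncomputable section

open scoped TensorProduct

section Statement8

variable (n : ℕ)

/-- The `(n+1)`-dimensional module `V_n` of `sl(2,ℂ)`, with basis `W_0, …, W_n`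
given by `W_k = Pi.single k 1`. -/
abbrev Vfd := Fin (n + 1) → ℂ

/-- `ℂ[X,Y]`, with `X = MvPolynomial.X 0` and `Y = MvPolynomial.X 1`. -/
abbrev PolyXY := MvPolynomial (Fin 2) ℂ

/-- Multiplication by `X`. -/
def mulX : PolyXY →ₗ[ℂ] PolyXY := LinearMap.mulLeft ℂ (MvPolynomial.X 0)

/-- Multiplication by `Y`. -/
def mulY : PolyXY →ₗ[ℂ] PolyXY := LinearMap.mulLeft ℂ (MvPolynomial.X 1)

open Function
open TensorProduct (lid)

section Recurrence

variable {K M : Type*} [Field K] [CharZero K] [AddCommGroup M] [Module K M]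
  {N : ℤ} {x y : M →ₗ[K] M} {f : ℤ → M}
  (hrec : ∀ j : ℤ,
    ((N + 1 - j : ℤ) : K) • y (f (j - 1)) + ((j + 1 : ℤ) : K) • x (f (j + 1)) = 0)
include hrec

theorem apply_two_mul_sub_one_eq_zero_of_recurrence (hx : Injective x) (hlo : f (-1) = 0)
    (i : ℕ) : f (2 * i - 1) = 0 := by
  induction i with
  | zero => simpa using hlo
  | succ i ih =>
    have h := hrec (2 * i)
    rw [ih, map_zero, smul_zero, zero_add, smul_eq_zero, map_eq_zero_iff x hx] at h
    push_cast at h ⊢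
    rw [show 2 * ((i : ℤ) + 1) - 1 = 2 * i + 1 by ring]
    exact h.resolve_left (by exact_mod_cast (by omega : (2 * i + 1 : ℤ) ≠ 0))

theorem apply_add_one_sub_two_mul_eq_zero_of_recurrence (hy : Injective y)
    (hhi : f (N + 1) = 0) (i : ℕ) : f (N + 1 - 2 * i) = 0 := by
  induction i with
  | zero => simpa using hhi
  | succ i ih =>
    have h := hrec (N - 2 * i)
    rw [show N - 2 * i + 1 = N + 1 - 2 * i by ring, ih, map_zero, smul_zero, add_zero,
      smul_eq_zero, map_eq_zero_iff y hy] at h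
    push_cast at h ⊢
    rw [show N + 1 - 2 * ((i : ℤ) + 1) = N - 2 * i - 1 by ring]
    exact h.resolve_left (by exact_mod_cast (by omega : (N + 1 - (N - 2 * i) : ℤ) ≠ 0))

theorem eq_zero_of_recurrence (hN : Odd N) (hx : Injective x) (hy : Injective y)
    (hlo : f (-1) = 0) (hhi : f (N + 1) = 0) {k : ℤ} (hk₀ : 0 ≤ k) (hkN : k ≤ N) :
    f k = 0 := by
  obtain ⟨m, rfl⟩ := hN
  rcases Int.even_or_odd k with ⟨i, rfl⟩ | ⟨i, rfl⟩
  · convert apply_add_one_sub_two_mul_eq_zero_of_recurrence hrec hy hhi (m + 1 - i).toNat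
      using 2
    omega
  · convert apply_two_mul_sub_one_eq_zero_of_recurrence hrec hx hlo (i + 1).toNat using 2
    omega

end Recurrence

namespace TensorProduct

variable {R V M : Type*} [CommRing R] [AddCommGroup V] [Module R V]
  [AddCommGroup M] [Module R M]

theorem lid_rTensor_map_of_comp_eq_smul {φ ψ : V →ₗ[R] R} {f : V →ₗ[R] V} {c : R}
    (h : φ ∘ₗ f = c • ψ) (a : M →ₗ[R] M) (w : V ⊗[R] M) :
    lid R M (φ.rTensor M (map f a w)) = c • a (lid R M (ψ.rTensor M w)) := by
  induction w using TensorProduct.induction_on with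
  | zero => simp
  | tmul v m =>
    have hv := congr($h v)
    simp only [LinearMap.comp_apply, LinearMap.smul_apply, smul_eq_mul] at hv
    simp [hv, mul_smul]
  | add w w' hw hw' => simp only [map_add, hw, hw', smul_add]

theorem eq_zero_of_forall_lid_rTensor_proj {ι : Type*} [Fintype ι] [DecidableEq ι]
    {w : (ι → R) ⊗[R] M} (h : ∀ i, lid R M ((LinearMap.proj i).rTensor M w) = 0) :
    w = 0 := by
  have piScalarRight_comm_apply (i : ι) (u : (ι → R) ⊗[R] M) :
      piScalarRight R R M ι (TensorProduct.comm R _ M u) i =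
        lid R M ((LinearMap.proj i).rTensor M u) := by
    induction u using TensorProduct.induction_on with
    | zero => simp
    | tmul v m => simp
    | add u u' hu hu' => simp only [map_add, Pi.add_apply, hu, hu']
  apply (TensorProduct.comm R _ M).injective
  apply (piScalarRight R R M ι).injective
  ext i
  simp [piScalarRight_comm_apply, h]

end TensorProduct

namespace Vfd

/-- Coordinates in the basis `W_0, …, W_n`, extended by zero to all of `ℤ` so that the action of
`π(X)` and `π(Y)` on them has no boundary cases. -/
def coord (n : ℕ) (j : ℤ) : Vfd n →ₗ[ℂ] ℂ :=
  if h : 0 ≤ j ∧ j < n + 1 then LinearMap.proj ⟨j.toNat, by omega⟩ else 0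

theorem coord_natCast (n : ℕ) (k : Fin (n + 1)) : coord n k = LinearMap.proj k := by
  simp [coord]
  omega

theorem coord_single (n : ℕ) (j : ℤ) (k : Fin (n + 1)) :
    coord n j (Pi.single k 1) = if j = k then 1 else 0 := by
  unfold coord
  split_ifs with h1 h2 h2 <;> simp [Pi.single_apply, Fin.ext_iff] <;> omega

theorem coord_comp_eq_smul_of_raising {n : ℕ} {πX : Vfd n →ₗ[ℂ] Vfd n}
    (hπX : ∀ k : Fin (n + 1), πX (Pi.single k 1 : Vfd n) =
      if h : (k : ℕ) < n then ((n - (k : ℕ) : ℕ) : ℂ) •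
        (Pi.single (⟨(k : ℕ) + 1, Nat.succ_lt_succ h⟩ : Fin (n + 1)) 1 : Vfd n) else 0)
    (j : ℤ) :
    coord n j ∘ₗ πX = ((n + 1 - j : ℤ) : ℂ) • coord n (j - 1) := by
  refine LinearMap.pi_ext' fun k => LinearMap.ext_ring ?_
  simp only [LinearMap.comp_apply, LinearMap.smul_apply, LinearMap.coe_single, hπX k]
  split_ifs with hk
  · simp only [map_smul, coord_single, Nat.cast_sub hk.le]
    split_ifs with hj hj' hj' <;> try omega
    · simp [hj]
    · simp
  · simp only [map_zero, coord_single, smul_ite, smul_zero]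
    split_ifs with hj
    · simp [show (n : ℤ) + 1 - j = 0 by omega]
    · rfl

theorem coord_comp_eq_smul_of_lowering {n : ℕ} {πY : Vfd n →ₗ[ℂ] Vfd n}
    (hπY : ∀ k : Fin (n + 1), πY (Pi.single k 1 : Vfd n) =
      if h : 0 < (k : ℕ) then ((k : ℕ) : ℂ) •
        (Pi.single (⟨(k : ℕ) - 1, Nat.sub_one_lt_of_le h k.is_lt.le⟩ : Fin (n + 1)) 1 : Vfd n)
        else 0)
    (j : ℤ) :
    coord n j ∘ₗ πY = ((j + 1 : ℤ) : ℂ) • coord n (j + 1) := by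
  refine LinearMap.pi_ext' fun k => LinearMap.ext_ring ?_
  simp only [LinearMap.comp_apply, LinearMap.smul_apply, LinearMap.coe_single, hπY k]
  split_ifs with hk
  · simp only [map_smul, coord_single]
    split_ifs with hj hj' hj' <;> try omega
    · simp [hj']
    · simp
  · simp only [map_zero, coord_single, smul_ite, smul_zero]
    split_ifs with hj
    · simp [show j + 1 = 0 by omega]
    · rfl

end Vfd

theorem mulX_injective : Injective mulX :=
  mul_right_injective₀ (MvPolynomial.X_ne_zero 0)

theorem mulY_injective : Injective mulY :=
  mul_right_injective₀ (MvPolynomial.X_ne_zero 1)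

/-- If `n` is odd then the symplectic Dirac operator
`D⁺ = 2 π(X)⊗M_Y + 2 π(Y)⊗M_X` on `V_n ⊗ ℂ[X,Y]` is injective.  Here
`π(X) W_k = (n−k)·W_{k+1}` and `π(Y) W_k = k·W_{k−1}` (with `W_{−1} = W_{n+1} = 0`). -/
theorem statement8
    (πX πY : Vfd n →ₗ[ℂ] Vfd n)
    (hπX : ∀ k : Fin (n + 1), πX (Pi.single k 1 : Vfd n) =
      if h : (k : ℕ) < n then ((n - (k : ℕ) : ℕ) : ℂ) •
        (Pi.single (⟨(k : ℕ) + 1, by omega⟩ : Fin (n + 1)) 1 : Vfd n) else 0)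
    (hπY : ∀ k : Fin (n + 1), πY (Pi.single k 1 : Vfd n) =
      if h : 0 < (k : ℕ) then ((k : ℕ) : ℂ) •
        (Pi.single (⟨(k : ℕ) - 1, by omega⟩ : Fin (n + 1)) 1 : Vfd n) else 0)
    (Dplus : Vfd n ⊗[ℂ] PolyXY →ₗ[ℂ] Vfd n ⊗[ℂ] PolyXY)
    (hD : Dplus = 2 • (TensorProduct.map πX mulY + TensorProduct.map πY mulX))
    (hodd : Odd n) :
    Function.Injective Dplus := by
  rw [← LinearMap.ker_eq_bot, LinearMap.ker_eq_bot']
  intro z hz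
  set f : ℤ → PolyXY := fun j => lid ℂ PolyXY ((Vfd.coord n j).rTensor PolyXY z)
  have hrec (j : ℤ) :
      ((n + 1 - j : ℤ) : ℂ) • mulY (f (j - 1)) +
        ((j + 1 : ℤ) : ℂ) • mulX (f (j + 1)) = 0 := by
    have h := congr(lid ℂ PolyXY ((Vfd.coord n j).rTensor PolyXY $hz))
    have hX := Vfd.coord_comp_eq_smul_of_raising hπX j
    have hY := Vfd.coord_comp_eq_smul_of_lowering hπY j
    simp only [hD, LinearMap.smul_apply, LinearMap.add_apply, map_nsmul, map_add, map_zero,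
      TensorProduct.lid_rTensor_map_of_comp_eq_smul hX,
      TensorProduct.lid_rTensor_map_of_comp_eq_smul hY] at h
    exact (smul_eq_zero.mp h).resolve_left two_ne_zero
  refine TensorProduct.eq_zero_of_forall_lid_rTensor_proj fun k => ?_
  rw [← Vfd.coord_natCast]
  exact eq_zero_of_recurrence hrec hodd.natCast mulX_injective mulY_injective
    (by simp [f, Vfd.coord]) (by simp [f, Vfd.coord]) (by positivity) (by omega)

end Statement8

end
end

section
/- Let Φ be an irreducible reduced root system spanning a finite-dimensional real vector space V with Weyl group W, and let B be a W-invariant positive-definite symmetric bilinear form on V, so that each reflection s_α (α ∈ Φ) lies in O(V,B). Then the set of commutators {[s_α,s_β] = s_α∘s_β − s_β∘s_α : α,β ∈ Φ} ⊂ End(V) spans the Lie algebra so(V,B) of B-skew-adjoint endomorphisms of V. -/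
/-!
The commutator `[s_α, s_β]` is `4 B(α,β) / (B(α,α) B(β,β))` times the rank-two skew map
`α ∧ β : w ↦ B(β,w) α - B(α,w) β`, and the maps `u ∧ v` span `so(V,B)`. Since `Φ` spans `V`
and `∧` is bilinear, it suffices to reach `α ∧ β` for roots `α, β`. If `B(α,β) ≠ 0` it is a
multiple of a commutator. Otherwise irreducibility yields a root `γ` with `B(α,γ) ≠ 0 ≠ B(γ,β)`,
and `α ∧ β = α ∧ s_γ β + c • α ∧ γ` with `B(α, s_γ β) = -c B(α,γ) ≠ 0`.
-/

noncomputable section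

open scoped Classical

section Statement10

variable {V : Type*} [AddCommGroup V] [Module ℝ V]

/-- The orthogonal reflection of `V` in the hyperplane perpendicular to `α`:
`s_α(v) = v − (2 B(α,v)/B(α,α)) α`. -/
def reflMap (B : LinearMap.BilinForm ℝ V) (α : V) : Module.End ℝ V :=
  LinearMap.id - (2 / B α α) • (B α).smulRight α

namespace LinearMap.BilinForm

section Wedge

variable {R M : Type*} [CommRing R] [AddCommGroup M] [Module R M] (B : LinearMap.BilinForm R M)

def wedge : M →ₗ[R] M →ₗ[R] Module.End R M :=
  LinearMap.mk₂ R (fun u v => (B v).smulRight u - (B u).smulRight v)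
    (fun _ _ _ => by ext; simp; module) (fun _ _ _ => by ext; simp; module)
    (fun _ _ _ => by ext; simp; module) (fun _ _ _ => by ext; simp; module)

@[simp]
lemma wedge_apply (u v w : M) : B.wedge u v w = B v w • u - B u w • v := rfl

variable {B}

lemma IsSymm.isSkewAdjoint_wedge (hB : B.IsSymm) (u v : M) : B.IsSkewAdjoint (B.wedge u v) := by
  intro x y
  simp only [wedge_apply, LinearMap.neg_apply, Pi.neg_apply, map_sub, map_smul, map_neg,
    LinearMap.sub_apply, LinearMap.smul_apply, smul_eq_mul, hB.eq x]
  ring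

end Wedge

section Field

variable {K V : Type*} [Field K] [AddCommGroup V] [Module K V] {B : LinearMap.BilinForm K V}

lemma two_smul_eq_sum_wedge (hB : B.IsSymm) (hnd : B.Nondegenerate) {ι : Type*} [Fintype ι]
    [DecidableEq ι] (b : Module.Basis ι K V) {f : Module.End K V} (hf : B.IsSkewAdjoint f) :
    (2 : K) • f = ∑ i, B.wedge (f (b i)) (B.dualBasis hnd b i) := by
  set d := B.dualBasis hnd b
  have hb (w : V) : ∑ i, B (d i) w • b i = w := by
    conv_rhs =>
      rw [← (B.flip.dualBasis hnd.flip d).sum_repr w]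
      simp only [dualBasis_repr_apply, flip_apply]
      simp only [d, dualBasis_flip_dualBasis]
  have hd (w : V) : ∑ i, B (b i) w • d i = w := by
    conv_rhs =>
      rw [← d.sum_repr w]
      simp only [d, dualBasis_repr_apply, hB.eq w]
  ext w
  have hf' (i : ι) : B (f (b i)) w = - B (b i) (f w) := by simpa using hf (b i) w
  calc (2 : K) • f w = f (∑ i, B (d i) w • b i) + ∑ i, B (b i) (f w) • d i := by
        rw [hb, hd, two_smul]
    _ = _ := by
        simp [map_sum, hf', sub_eq_add_neg, Finset.sum_add_distrib]

lemma skewAdjointSubmodule_eq_map₂_wedge [FiniteDimensional K V] (hB : B.IsSymm)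
    (hnd : B.Nondegenerate) (h2 : (2 : K) ≠ 0) :
    B.skewAdjointSubmodule = Submodule.map₂ B.wedge ⊤ ⊤ := by
  refine le_antisymm (fun f hf => ?_) (Submodule.map₂_le.mpr fun u _ v _ =>
    (mem_skewAdjointSubmodule _).mpr (hB.isSkewAdjoint_wedge u v))
  rw [← inv_smul_smul₀ h2 f, two_smul_eq_sum_wedge hB hnd (Module.finBasis K V)
    ((mem_skewAdjointSubmodule f).mp hf)]
  exact Submodule.smul_mem _ _ (Submodule.sum_mem _ fun i _ =>
    Submodule.apply_mem_map₂ _ Submodule.mem_top Submodule.mem_top)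

end Field

section Irreducible

variable {R M : Type*} [CommRing R] [AddCommGroup M] [Module R M]

def IsOrthogonallyIndecomposable (B : LinearMap.BilinForm R M) (Φ : Finset M) : Prop :=
  ∀ Φ₁ Φ₂ : Finset M, Φ₁ ∪ Φ₂ = Φ → (∀ α ∈ Φ₁, ∀ β ∈ Φ₂, B α β = 0) → Φ₁ = ∅ ∨ Φ₂ = ∅

def IsLinked (B : LinearMap.BilinForm R M) (Φ : Finset M) (γ δ : M) : Prop :=
  γ ∈ Φ ∧ δ ∈ Φ ∧ B γ δ ≠ 0

lemma IsOrthogonallyIndecomposable.reflTransGen_isLinked {B : LinearMap.BilinForm R M}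
    {Φ : Finset M} (hirr : B.IsOrthogonallyIndecomposable Φ) {α β : M} (hα : α ∈ Φ)
    (hβ : β ∈ Φ) : Relation.ReflTransGen (B.IsLinked Φ) α β := by
  set C := Φ.filter (Relation.ReflTransGen (B.IsLinked Φ) α)
  have horth : ∀ γ ∈ C, ∀ δ ∈ Φ \ C, B γ δ = 0 := by
    intro γ hγ δ hδ
    rw [Finset.mem_filter] at hγ
    rw [Finset.mem_sdiff, Finset.mem_filter] at hδ
    by_contra h
    exact hδ.2 ⟨hδ.1, hγ.2.tail ⟨hγ.1, hδ.1, h⟩⟩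
  rcases hirr C (Φ \ C) (Finset.union_sdiff_of_subset (Finset.filter_subset _ _)) horth with h | h
  · have hαC : α ∈ C := Finset.mem_filter.mpr ⟨hα, Relation.ReflTransGen.refl⟩
    simp [h] at hαC
  · by_contra hαβ
    have hβC : β ∈ Φ \ C := Finset.mem_sdiff.mpr ⟨hβ, fun h => hαβ (Finset.mem_filter.mp h).2⟩
    simp [h] at hβC

end Irreducible

end LinearMap.BilinForm

open LinearMap.BilinForm

lemma reflMap_apply (B : LinearMap.BilinForm ℝ V) (α v : V) :
    reflMap B α v = v - (2 / B α α * B α v) • α := by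
  simp [reflMap, smul_smul]

lemma reflMap_commutator {B : LinearMap.BilinForm ℝ V} (hB : B.IsSymm) (α β : V) :
    reflMap B α * reflMap B β - reflMap B β * reflMap B α
      = (4 * B α β / (B α α * B β β)) • B.wedge α β := by
  ext w
  simp only [LinearMap.sub_apply, Module.End.mul_apply, LinearMap.smul_apply, reflMap_apply,
    wedge_apply, map_sub, map_smul, hB.eq β α]
  match_scalars <;> ring

def reflCommutators (B : LinearMap.BilinForm ℝ V) (Φ : Finset V) : Set (Module.End ℝ V) :=
  {f | ∃ α ∈ Φ, ∃ β ∈ Φ, f = reflMap B α * reflMap B β - reflMap B β * reflMap B α}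

variable {B : LinearMap.BilinForm ℝ V} {Φ : Finset V}

-- If `δ` is linked to `α` and `γ`, `γ` to `β`, and `α ⊥ γ`, `δ ⊥ β`, then `s_δ γ = γ - c δ`
-- is linked to both `α` and `β`; so every chain of linked roots collapses to length two.
lemma exists_common_neighbor_of_transGen (hΦ : ∀ γ ∈ Φ, B γ γ ≠ 0)
    (hrefl : ∀ α ∈ Φ, ∀ β ∈ Φ, reflMap B α β ∈ Φ) {α β : V}
    (h : Relation.TransGen (B.IsLinked Φ) α β) :
    B α β ≠ 0 ∨ ∃ γ ∈ Φ, B α γ ≠ 0 ∧ B γ β ≠ 0 := by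
  induction h with
  | single h => exact .inl h.2.2
  | @tail γ β _ hγβ ih =>
    obtain ⟨hγ, -, hγβ⟩ := hγβ
    obtain hαβ | hαβ := ne_or_eq (B α β) 0
    · exact .inl hαβ
    right
    obtain hαγ | hαγ := ne_or_eq (B α γ) 0
    · exact ⟨γ, hγ, hαγ, hγβ⟩
    obtain ⟨δ, hδ, hαδ, hδγ⟩ := ih.resolve_left (not_not.mpr hαγ)
    obtain hδβ | hδβ := ne_or_eq (B δ β) 0
    · exact ⟨δ, hδ, hαδ, hδβ⟩
    refine ⟨reflMap B δ γ, hrefl δ hδ γ hγ, ?_, ?_⟩ <;>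
      simp [reflMap_apply, hαγ, hδβ, hαδ, hδγ, hΦ δ hδ, hγβ]

lemma exists_common_neighbor (hΦ : ∀ γ ∈ Φ, B γ γ ≠ 0)
    (hrefl : ∀ α ∈ Φ, ∀ β ∈ Φ, reflMap B α β ∈ Φ) (hirr : B.IsOrthogonallyIndecomposable Φ)
    {α β : V} (hα : α ∈ Φ) (hβ : β ∈ Φ) (hαβ : B α β = 0) :
    ∃ γ ∈ Φ, B α γ ≠ 0 ∧ B γ β ≠ 0 := by
  rcases Relation.reflTransGen_iff_eq_or_transGen.mp (hirr.reflTransGen_isLinked hα hβ)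
    with rfl | hpath
  · exact absurd hαβ (hΦ β hβ)
  · exact (exists_common_neighbor_of_transGen hΦ hrefl hpath).resolve_left (not_not.mpr hαβ)

lemma wedge_mem_span_reflCommutators_of_ne (hB : B.IsSymm) (hΦ : ∀ γ ∈ Φ, B γ γ ≠ 0)
    {α β : V} (hα : α ∈ Φ) (hβ : β ∈ Φ) (hαβ : B α β ≠ 0) :
    B.wedge α β ∈ Submodule.span ℝ (reflCommutators B Φ) := by
  have hc : 4 * B α β / (B α α * B β β) ≠ 0 := by simp [hαβ, hΦ α hα, hΦ β hβ]
  rw [← inv_smul_smul₀ hc (B.wedge α β), ← reflMap_commutator hB]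
  exact Submodule.smul_mem _ _ (Submodule.subset_span ⟨α, hα, β, hβ, rfl⟩)

lemma wedge_mem_span_reflCommutators (hB : B.IsSymm) (hΦ : ∀ γ ∈ Φ, B γ γ ≠ 0)
    (hrefl : ∀ α ∈ Φ, ∀ β ∈ Φ, reflMap B α β ∈ Φ) (hirr : B.IsOrthogonallyIndecomposable Φ)
    {α β : V} (hα : α ∈ Φ) (hβ : β ∈ Φ) :
    B.wedge α β ∈ Submodule.span ℝ (reflCommutators B Φ) := by
  obtain hαβ | hαβ := ne_or_eq (B α β) 0
  · exact wedge_mem_span_reflCommutators_of_ne hB hΦ hα hβ hαβ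
  obtain ⟨γ, hγ, hαγ, hγβ⟩ := exists_common_neighbor hΦ hrefl hirr hα hβ hαβ
  set c := 2 / B γ γ * B γ β
  have hsplit : B.wedge α β = B.wedge α (reflMap B γ β) + c • B.wedge α γ := by
    rw [reflMap_apply, map_sub, map_smul, sub_add_cancel]
  have hαβ' : B α (reflMap B γ β) ≠ 0 := by simp [reflMap_apply, hαβ, hαγ, hγβ, hΦ γ hγ]
  rw [hsplit]
  exact add_mem (wedge_mem_span_reflCommutators_of_ne hB hΦ hα (hrefl γ hγ β hβ) hαβ')
    (Submodule.smul_mem _ _ (wedge_mem_span_reflCommutators_of_ne hB hΦ hα hγ hαγ))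

theorem statement10_general [FiniteDimensional ℝ V]
    (B : LinearMap.BilinForm ℝ V)
    (hBsymm : ∀ u v, B u v = B v u)
    (hBpos : ∀ v, v ≠ 0 → 0 < B v v)
    (Φ : Finset V)
    (h0 : (0 : V) ∉ Φ)
    (hspan : Submodule.span ℝ (Φ : Set V) = ⊤)
    (hrefl : ∀ α ∈ Φ, ∀ β ∈ Φ, reflMap B α β ∈ Φ)
    (hirr : ∀ Φ₁ Φ₂ : Finset V, Φ₁ ∪ Φ₂ = Φ →
      (∀ α ∈ Φ₁, ∀ β ∈ Φ₂, B α β = 0) → Φ₁ = ∅ ∨ Φ₂ = ∅) :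
    Submodule.span ℝ
      {f : Module.End ℝ V | ∃ α ∈ Φ, ∃ β ∈ Φ,
        f = reflMap B α * reflMap B β - reflMap B β * reflMap B α}
      = B.skewAdjointSubmodule := by
  have hB : B.IsSymm := ⟨hBsymm⟩
  have hΦ : ∀ α ∈ Φ, B α α ≠ 0 := fun α hα => (hBpos α (ne_of_mem_of_not_mem hα h0)).ne'
  have hnd : B.Nondegenerate :=
    ⟨fun v hv => by_contra fun h => (hBpos v h).ne' (hv v),
      fun v hv => by_contra fun h => (hBpos v h).ne' (hv v)⟩
  rw [skewAdjointSubmodule_eq_map₂_wedge hB hnd two_ne_zero, ← hspan, Submodule.map₂_span_span]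
  refine le_antisymm (Submodule.span_le.mpr ?_) (Submodule.span_le.mpr ?_)
  · rintro _ ⟨α, hα, β, hβ, rfl⟩
    rw [SetLike.mem_coe, reflMap_commutator hB]
    exact Submodule.smul_mem _ _ (Submodule.subset_span ⟨α, hα, β, hβ, rfl⟩)
  · rintro _ ⟨α, hα, β, hβ, rfl⟩
    exact wedge_mem_span_reflCommutators hB hΦ hrefl hirr hα hβ

/-- Let `Φ` be an irreducible reduced root system spanning `V`, `B` a
Weyl-group-invariant positive-definite symmetric bilinear form.  Then the commutators
`[s_α, s_β]`, `α, β ∈ Φ`, span the Lie algebra `so(V,B)` of `B`-skew-adjoint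
endomorphisms of `V`. -/
theorem statement10 [FiniteDimensional ℝ V]
    (B : LinearMap.BilinForm ℝ V)
    (hBsymm : ∀ u v, B u v = B v u)
    (hBpos : ∀ v, v ≠ 0 → 0 < B v v)
    (Φ : Finset V)
    (h0 : (0 : V) ∉ Φ)
    (hspan : Submodule.span ℝ (Φ : Set V) = ⊤)
    (hrefl : ∀ α ∈ Φ, ∀ β ∈ Φ, reflMap B α β ∈ Φ)
    (hred : ∀ α ∈ Φ, ∀ c : ℝ, c • α ∈ Φ → c = 1 ∨ c = -1)
    (hcrys : ∀ α ∈ Φ, ∀ β ∈ Φ, ∃ m : ℤ, 2 * B α β / B α α = (m : ℝ))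
    (hirr : ∀ Φ₁ Φ₂ : Finset V, Φ₁ ∪ Φ₂ = Φ →
      (∀ α ∈ Φ₁, ∀ β ∈ Φ₂, B α β = 0) → Φ₁ = ∅ ∨ Φ₂ = ∅) :
    Submodule.span ℝ
      {f : Module.End ℝ V | ∃ α ∈ Φ, ∃ β ∈ Φ,
        f = reflMap B α * reflMap B β - reflMap B β * reflMap B α}
      = B.skewAdjointSubmodule :=
  statement10_general B hBsymm hBpos Φ h0 hspan hrefl hirr

end Statement10

end
end

section
/- Let n ≥ 2 and consider the root system of type A_{n−1}: Φ = {ε_i−ε_j : 1 ≤ i ≠ j ≤ n} in ℝⁿ with the standard inner product B, positive roots ε_i−ε_j (i < j), Weyl group S_n with s_{ε_i−ε_j} the transposition (i j), and all parameters k_α = 1. Set Ω_{S_n} = (1/4)Σ_{α,β>0} B(α,β)·s_α s_β ∈ ℂ[S_n]. Then: (a) Ω_{S_n} = (1/4)(n(n−1) + e_{(123)}), where e_{(123)} ∈ ℂ[S_n] is the sum of all 3-cycles; (b) Ω_{S_n} = (1/4)(n(n−1)/2 + Σ_{i=1}^{n} T_i²), where T_i = (1,i)+(2,i)+⋯+(i−1,i)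 ∈ ℂ[S_n] are the Jucys–Murphy elements (T_1 = 0). -/
/-!
Since `B(α, β) = ∑ₘ α(m) β(m)`, we get `4 Ω = ∑ₘ Xₘ²` with `Xₘ = ∑_{α>0} α(m) s_α = Uₘ - Tₘ`,
where `Tₘ` is the Jucys–Murphy element and `Uₘ = (m,m+1) + ⋯ + (m,n)` its mirror image.
In `∑ Uₘ²` and `∑ Tₘ²` the squares of transpositions give `n(n-1)/2` copies of `1` each; all
other products are of two transpositions sharing one point, i.e. 3-cycles. Grouped by the
triple `a < b < c` they move, each of `∑ Uₘ²`, `∑ Tₘ²` and `∑ (Uₘ Tₘ + Tₘ Uₘ)` contains the two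
3-cycles on `{a, b, c}` exactly once. Hence `4 Ω = n(n-1) + 2 e₍₁₂₃₎ - e₍₁₂₃₎` and
`∑ Tₘ² = n(n-1)/2 + e₍₁₂₃₎`.
-/

noncomputable section

open scoped Classical

section Statement13

variable (n : ℕ)

/-- The positive roots of type `A_{n-1}`: the roots `ε_i − ε_j`, `i < j`, encoded by the
pair `(i,j)`. -/
def posRootsA : Finset (Fin n × Fin n) := Finset.univ.filter fun p => p.1 < p.2

/-- The root `ε_i − ε_j` as a vector of `ℝⁿ`. -/
def rootVecA (p : Fin n × Fin n) : Fin n → ℝ := Pi.single p.1 1 - Pi.single p.2 1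

/-- The standard inner product of `ℝⁿ`. -/
def dotR (x y : Fin n → ℝ) : ℝ := ∑ i, x i * y i

/-- The sum of all `3`-cycles in `ℂ[S_n]`. -/
def threeCycleSum : MonoidAlgebra ℂ (Equiv.Perm (Fin n)) :=
  ∑ σ ∈ Finset.univ.filter fun σ : Equiv.Perm (Fin n) => σ.IsThreeCycle,
    MonoidAlgebra.single σ (1 : ℂ)

/-- The Jucys–Murphy element `T_i = (1,i) + (2,i) + ⋯ + (i−1,i)` (so `T_1 = 0`). -/
def jucysMurphy (i : Fin n) : MonoidAlgebra ℂ (Equiv.Perm (Fin n)) :=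
  ∑ j ∈ Finset.univ.filter fun j : Fin n => j < i,
    MonoidAlgebra.single (Equiv.swap j i) (1 : ℂ)

/-- `Ω_{S_n} = (1/4) Σ_{α,β>0} B(α,β) s_α s_β`, summed over ordered pairs of positive
roots of type `A_{n-1}`, with all parameters `k_α = 1`. -/
def OmegaSn : MonoidAlgebra ℂ (Equiv.Perm (Fin n)) :=
  (1 / 4 : ℂ) • ∑ p ∈ posRootsA n, ∑ q ∈ posRootsA n,
    ((dotR n (rootVecA n p) (rootVecA n q) : ℝ) : ℂ) •
      MonoidAlgebra.single (Equiv.swap p.1 p.2 * Equiv.swap q.1 q.2) (1 : ℂ)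

open Finset Equiv Equiv.Perm MonoidAlgebra

theorem Finset.sum_sum_eq_sum_add_sum_sum_lt {α M : Type*} [Fintype α] [LinearOrder α]
    [AddCommMonoid M] (f : α → α → M) :
    ∑ i, ∑ j, f i j = ∑ i, f i i + ∑ i, ∑ j, if i < j then f i j + f j i else 0 := by
  have trichotomy (i j : α) : f i j = ((if i < j then f i j else 0) +
      if i = j then f i j else 0) + if j < i then f i j else 0 := by
    rcases lt_trichotomy i j with h | rfl | h
    · simp [h, h.ne, h.not_gt]
    · simp
    · simp [h, h.ne', h.not_gt]
  simp_rw [ite_add_zero]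
  conv_lhs => enter [2, i, 2, j]; rw [trichotomy i j]
  simp only [sum_add_distrib, sum_ite_eq, mem_univ, if_true]
  rw [Finset.sum_comm (f := fun i j => if j < i then f i j else 0)]
  abel

namespace Equiv.Perm

variable {α : Type*} [DecidableEq α]

-- the cycle `a ↦ b ↦ c ↦ a`
def cycle3 (a b c : α) : Perm α := swap a b * swap b c

section Distinct

variable {a b c : α}

theorem cycle3_rotate (hab : a ≠ b) (hbc : b ≠ c) (hac : a ≠ c) :
    cycle3 a b c = cycle3 b c a := by
  ext x
  simp only [cycle3, Perm.mul_apply, swap_apply_def]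
  split_ifs <;> grind

theorem isThreeCycle_cycle3 [Fintype α] (hab : a ≠ b) (hbc : b ≠ c) (hac : a ≠ c) :
    (cycle3 a b c).IsThreeCycle := by
  rw [cycle3, swap_comm a b]
  exact isThreeCycle_swap_mul_swap_same hab.symm hbc hac

theorem cycle3_apply_left (hab : a ≠ b) (hac : a ≠ c) : cycle3 a b c a = b := by
  simp [cycle3, swap_apply_of_ne_of_ne hab hac]

theorem cycle3_apply_cycle3_apply_left (hab : a ≠ b) (hbc : b ≠ c) (hac : a ≠ c) :
    cycle3 a b c (cycle3 a b c a) = c := by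
  rw [cycle3_apply_left hab hac]
  simp [cycle3, swap_apply_of_ne_of_ne hac.symm hbc.symm]

theorem cycle3_apply_of_ne {x : α} (hxa : x ≠ a) (hxb : x ≠ b) (hxc : x ≠ c) :
    cycle3 a b c x = x := by
  simp [cycle3, swap_apply_of_ne_of_ne hxb hxc, swap_apply_of_ne_of_ne hxa hxb]

theorem swap_mul_swap_eq_cycle3_of_right (a b c : α) : swap a c * swap b c = cycle3 a c b := by
  rw [cycle3, swap_comm c b]

theorem swap_mul_swap_eq_cycle3_of_left (hab : a ≠ b) (hbc : b ≠ c) (hac : a ≠ c) :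
    swap a b * swap a c = cycle3 a c b := by
  rw [swap_comm a b, ← cycle3, cycle3_rotate hab.symm hac hbc]

theorem swap_mul_swap_eq_cycle3_of_mid (hab : a ≠ b) (hbc : b ≠ c) (hac : a ≠ c) :
    swap b c * swap a b = cycle3 a c b := by
  rw [swap_comm b c, swap_comm a b, ← cycle3, cycle3_rotate hbc.symm hab.symm hac.symm,
    cycle3_rotate hab.symm hac hbc]

end Distinct

section LinearOrder

variable [LinearOrder α] {a b c a' b' c' : α}

theorem eq_of_cycle3_eq (h : a < b ∧ a < c ∧ b ≠ c) (h' : a' < b' ∧ a' < c' ∧ b' ≠ c')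
    (e : cycle3 a b c = cycle3 a' b' c') : (a, b, c) = (a', b', c') := by
  -- `a` is the least point moved by `cycle3 a b c`
  have min_le {a b c a' b' c' : α} (h : a < b ∧ a < c) (h' : a' < b' ∧ a' < c')
      (e : cycle3 a b c = cycle3 a' b' c') : a ≤ a' := by
    by_contra! hlt
    have := congrArg (· a') e
    simp only [cycle3_apply_left h'.1.ne h'.2.ne,
      cycle3_apply_of_ne hlt.ne (hlt.trans h.1).ne (hlt.trans h.2).ne] at this
    exact h'.1.ne this
  obtain rfl : a = a' := le_antisymm (min_le ⟨h.1, h.2.1⟩ ⟨h'.1, h'.2.1⟩ e)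
    (min_le ⟨h'.1, h'.2.1⟩ ⟨h.1, h.2.1⟩ e.symm)
  have hb := congrArg (· a) e
  have hc := congrArg (fun σ => σ (σ a)) e
  simp only [cycle3_apply_left h.1.ne h.2.1.ne, cycle3_apply_left h'.1.ne h'.2.1.ne] at hb
  simp only [cycle3_apply_cycle3_apply_left h.1.ne h.2.2 h.2.1.ne,
    cycle3_apply_cycle3_apply_left h'.1.ne h'.2.2 h'.2.1.ne] at hc
  rw [hb, hc]

variable [Fintype α]

theorem exists_cycle3_eq_of_isThreeCycle {σ : Perm α} (hσ : σ.IsThreeCycle) :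
    ∃ a b c, (a < b ∧ a < c ∧ b ≠ c) ∧ cycle3 a b c = σ := by
  have hne : σ.support.Nonempty := by
    rw [← card_pos, hσ.card_support]; norm_num
  set a := σ.support.min' hne
  have ha : a ∈ σ.support := min'_mem _ _
  have hnd := hσ.nodup_iff_mem_support.mpr ha
  simp only [List.nodup_cons, List.mem_cons, not_or, List.not_mem_nil, not_false_eq_true,
    List.nodup_nil, and_true] at hnd
  refine ⟨a, σ a, σ (σ a), ⟨?_, ?_, hnd.2⟩, (hσ.eq_swap_mul_swap_iff_mem_support.mpr ha).symm⟩
  · exact lt_of_le_of_ne (min'_le _ _ (apply_mem_support.mpr ha)) hnd.1.1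
  · exact lt_of_le_of_ne (min'_le _ _ (apply_mem_support.mpr (apply_mem_support.mpr ha))) hnd.1.2

theorem sum_isThreeCycle {M : Type*} [AddCommMonoid M] (F : Perm α → M) :
    ∑ σ ∈ univ.filter IsThreeCycle, F σ =
      ∑ a, ∑ b, ∑ c, if a < b ∧ b < c then F (cycle3 a b c) + F (cycle3 a c b) else 0 := by
  have by_least_point : ∑ σ ∈ univ.filter IsThreeCycle, F σ =
      ∑ t ∈ univ.filter (fun t : α × α × α => t.1 < t.2.1 ∧ t.1 < t.2.2 ∧ t.2.1 ≠ t.2.2),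
        F (cycle3 t.1 t.2.1 t.2.2) := by
    refine (sum_bij (fun t _ => cycle3 t.1 t.2.1 t.2.2) ?_ ?_ ?_ fun _ _ => rfl).symm
    · intro ⟨a, b, c⟩ h
      simp only [mem_filter, mem_univ, true_and] at h ⊢
      exact isThreeCycle_cycle3 h.1.ne h.2.2 h.2.1.ne
    · intro ⟨a, b, c⟩ h ⟨a', b', c'⟩ h'
      simp only [mem_filter, mem_univ, true_and] at h h'
      exact eq_of_cycle3_eq h h'
    · intro σ hσ
      simp only [mem_filter, mem_univ, true_and] at hσ
      obtain ⟨a, b, c, h, rfl⟩ := exists_cycle3_eq_of_isThreeCycle hσ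
      exact ⟨(a, b, c), by simpa using h, rfl⟩
  rw [by_least_point, sum_filter, Fintype.sum_prod_type]
  refine sum_congr rfl fun a _ => ?_
  rw [Fintype.sum_prod_type, sum_sum_eq_sum_add_sum_sum_lt]
  simp only [ne_eq, not_true_eq_false, and_false, if_false, sum_const_zero, zero_add]
  refine sum_congr rfl fun b _ => sum_congr rfl fun c _ => ?_
  split_ifs <;> first | (exfalso; grind) | simp only [add_zero]

end LinearOrder

end Equiv.Perm

theorem sum_sum_dot_smul_mul_eq_sum_sq {ι κ A : Type*} [Fintype κ] [Ring A] [Algebra ℂ A]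
    (s : Finset ι) (v : ι → κ → ℝ) (x : ι → A) :
    ∑ p ∈ s, ∑ q ∈ s, ((∑ m, v p m * v q m : ℝ) : ℂ) • (x p * x q) =
      ∑ m, (∑ p ∈ s, (v p m : ℂ) • x p) ^ 2 := by
  simp only [sq, sum_mul_sum, smul_mul_smul_comm, ← Complex.ofReal_mul, Complex.ofReal_sum,
    sum_smul]
  conv_rhs => rw [sum_comm]
  exact sum_congr rfl fun p _ => sum_comm

theorem sum_card_filter_lt :
    ∑ i : Fin n, (#{j | j < i} : ℂ) = n * (n - 1) / 2 := by
  simp only [filter_gt_eq_Iio, Fin.card_Iio]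
  induction n with
  | zero => simp
  | succ k ih =>
    rw [Fin.sum_univ_castSucc]
    simp only [Fin.val_castSucc, ih, Fin.val_last]
    push_cast
    ring

theorem sum_card_filter_gt :
    ∑ i : Fin n, (#{j | i < j} : ℂ) = n * (n - 1) / 2 := by
  rw [← sum_card_filter_lt]
  simp only [card_filter, Nat.cast_sum, Nat.cast_ite, Nat.cast_one, Nat.cast_zero]
  exact sum_comm

theorem threeCycleSum_eq :
    threeCycleSum n = ∑ a : Fin n, ∑ b, ∑ c, if a < b ∧ b < c then
      of ℂ _ (cycle3 a b c) + of ℂ _ (cycle3 a c b) else 0 :=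
  sum_isThreeCycle _

def dualJucysMurphy (i : Fin n) : MonoidAlgebra ℂ (Equiv.Perm (Fin n)) :=
  ∑ j ∈ Finset.univ.filter fun j : Fin n => i < j,
    MonoidAlgebra.single (Equiv.swap i j) (1 : ℂ)

theorem jucysMurphy_eq_sum_ite (i : Fin n) :
    jucysMurphy n i = ∑ j, if j < i then of ℂ _ (swap j i) else 0 := by
  simp [jucysMurphy, sum_filter]

theorem dualJucysMurphy_eq_sum_ite (i : Fin n) :
    dualJucysMurphy n i = ∑ j, if i < j then of ℂ _ (swap i j) else 0 := by
  simp [dualJucysMurphy, sum_filter]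

theorem sum_rootVecA_smul (m : Fin n) :
    ∑ p ∈ posRootsA n, (rootVecA n p m : ℂ) • of ℂ _ (swap p.1 p.2) =
      dualJucysMurphy n m - jucysMurphy n m := by
  have coeff (i j : Fin n) :
      (if i < j then (rootVecA n (i, j) m : ℂ) • of ℂ _ (swap i j) else 0) =
        (if m = i then if i < j then of ℂ _ (swap i j) else 0 else 0) -
          if m = j then if i < j then of ℂ _ (swap i j) else 0 else 0 := by
    simp only [rootVecA, Pi.sub_apply, Pi.single_apply]
    split_ifs <;> simp_all
  simp only [posRootsA, sum_filter, Fintype.sum_prod_type, coeff, sum_sub_distrib]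
  simp [dualJucysMurphy_eq_sum_ite, jucysMurphy_eq_sum_ite]

theorem OmegaSn_eq_sum_sq :
    OmegaSn n = (1 / 4 : ℂ) • ∑ m, (dualJucysMurphy n m - jucysMurphy n m) ^ 2 := by
  simp only [OmegaSn, ← of_apply, map_mul, dotR, sum_sum_dot_smul_mul_eq_sum_sq,
    sum_rootVecA_smul]

theorem jucysMurphy_sq (i : Fin n) :
    jucysMurphy n i ^ 2 = (#{j | j < i} : ℂ) • 1 +
      ∑ j, ∑ k, if j < k ∧ k < i then of ℂ _ (cycle3 j k i) + of ℂ _ (cycle3 j i k) else 0 := by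
  rw [jucysMurphy_eq_sum_ite, sq, sum_mul_sum]
  simp only [ite_zero_mul_ite_zero, ← map_mul]
  rw [sum_sum_eq_sum_add_sum_sum_lt]
  congr 1
  · simp [← MonoidAlgebra.one_def, sum_boole, Nat.cast_smul_eq_nsmul]
  refine sum_congr rfl fun j _ => sum_congr rfl fun k _ => ?_
  by_cases h : j < k ∧ k < i
  · obtain ⟨hjk, hki⟩ := h
    simp only [hjk, hki, hjk.trans hki, and_self, if_true]
    rw [swap_mul_swap_eq_cycle3_of_right, swap_mul_swap_eq_cycle3_of_right,
      ← cycle3_rotate hjk.ne hki.ne (hjk.trans hki).ne, add_comm]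
  · rw [if_neg h]
    split_ifs <;> first | (exfalso; grind) | simp

theorem dualJucysMurphy_sq (i : Fin n) :
    dualJucysMurphy n i ^ 2 = (#{j | i < j} : ℂ) • 1 +
      ∑ j, ∑ k, if i < j ∧ j < k then of ℂ _ (cycle3 i j k) + of ℂ _ (cycle3 i k j) else 0 := by
  rw [dualJucysMurphy_eq_sum_ite, sq, sum_mul_sum]
  simp only [ite_zero_mul_ite_zero, ← map_mul]
  rw [sum_sum_eq_sum_add_sum_sum_lt]
  congr 1
  · simp [← MonoidAlgebra.one_def, sum_boole, Nat.cast_smul_eq_nsmul]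
  refine sum_congr rfl fun j _ => sum_congr rfl fun k _ => ?_
  by_cases h : i < j ∧ j < k
  · obtain ⟨hij, hjk⟩ := h
    simp only [hij, hjk, hij.trans hjk, and_self, if_true]
    rw [swap_mul_swap_eq_cycle3_of_left hij.ne hjk.ne (hij.trans hjk).ne,
      swap_mul_swap_eq_cycle3_of_left (hij.trans hjk).ne hjk.ne' hij.ne, add_comm]
  · rw [if_neg h]
    split_ifs <;> first | (exfalso; grind) | simp

theorem dualJucysMurphy_mul_add_mul_dualJucysMurphy (m : Fin n) :
    dualJucysMurphy n m * jucysMurphy n m + jucysMurphy n m * dualJucysMurphy n m =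
      ∑ i, ∑ j, if i < m ∧ m < j then of ℂ _ (cycle3 i m j) + of ℂ _ (cycle3 i j m) else 0 := by
  rw [dualJucysMurphy_eq_sum_ite, jucysMurphy_eq_sum_ite, sum_mul_sum, sum_mul_sum, sum_comm,
    ← sum_add_distrib]
  refine sum_congr rfl fun i _ => ?_
  rw [← sum_add_distrib]
  refine sum_congr rfl fun j _ => ?_
  simp only [ite_zero_mul_ite_zero, ← map_mul]
  by_cases h : i < m ∧ m < j
  · obtain ⟨him, hmj⟩ := h
    simp only [him, hmj, and_self, if_true]
    rw [swap_mul_swap_eq_cycle3_of_mid him.ne hmj.ne (him.trans hmj).ne, ← cycle3, add_comm]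
  · rw [if_neg h]
    split_ifs <;> first | (exfalso; grind) | simp

theorem sum_sq_jucysMurphy :
    ∑ i, jucysMurphy n i ^ 2 = (n * (n - 1) / 2 : ℂ) • 1 + threeCycleSum n := by
  simp only [jucysMurphy_sq, sum_add_distrib, ← sum_smul, sum_card_filter_lt, threeCycleSum_eq]
  rw [sum_comm]
  congr! 2 with a
  exact sum_comm

theorem sum_sq_dualJucysMurphy :
    ∑ i, dualJucysMurphy n i ^ 2 = (n * (n - 1) / 2 : ℂ) • 1 + threeCycleSum n := by
  simp only [dualJucysMurphy_sq, sum_add_distrib, ← sum_smul, sum_card_filter_gt,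
    threeCycleSum_eq]

theorem sum_dualJucysMurphy_mul_add_mul_dualJucysMurphy :
    ∑ m, (dualJucysMurphy n m * jucysMurphy n m + jucysMurphy n m * dualJucysMurphy n m) =
      threeCycleSum n := by
  simp only [dualJucysMurphy_mul_add_mul_dualJucysMurphy, threeCycleSum_eq]
  rw [sum_comm]

theorem OmegaSn_eq_threeCycleSum :
    OmegaSn n = (1 / 4 : ℂ) •
      (((n : ℂ) * ((n : ℂ) - 1)) • (1 : MonoidAlgebra ℂ (Equiv.Perm (Fin n))) +
        threeCycleSum n) := by
  have sub_sq (u t : MonoidAlgebra ℂ (Equiv.Perm (Fin n))) :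
      (u - t) ^ 2 = u ^ 2 + t ^ 2 - (u * t + t * u) := by noncomm_ring
  rw [OmegaSn_eq_sum_sq, sum_congr rfl fun m _ => sub_sq _ _, sum_sub_distrib, sum_add_distrib,
    sum_sq_dualJucysMurphy, sum_sq_jucysMurphy, sum_dualJucysMurphy_mul_add_mul_dualJucysMurphy]
  module

theorem statement13 :
    OmegaSn n = (1 / 4 : ℂ) •
        (((n : ℂ) * ((n : ℂ) - 1)) • (1 : MonoidAlgebra ℂ (Equiv.Perm (Fin n)))
          + threeCycleSum n) ∧
    OmegaSn n = (1 / 4 : ℂ) •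
        ((((n : ℂ) * ((n : ℂ) - 1)) / 2) • (1 : MonoidAlgebra ℂ (Equiv.Perm (Fin n)))
          + ∑ i, jucysMurphy n i ^ 2) := by
  refine ⟨OmegaSn_eq_threeCycleSum n, ?_⟩
  rw [OmegaSn_eq_threeCycleSum, sum_sq_jucysMurphy]
  module

end Statement13

end
end

section
/- Let n ≥ 3 and consider the root system of type A_{n−1}: Φ = {ε_i−ε_j : 1 ≤ i ≠ j ≤ n} in ℝⁿ with the standard inner product B (so B(α,α) = 2 and α∨ = α for every root), Weyl group S_n, with all parameters equal to 1. Then Ω′_{S_n} = (1/16)·Σ_{α,β>0, B(α,β)≠0} B(α∨,β∨)⁻¹·[s_α,s_β]² = (1/8)(e_{(123)} − n(n−1)(n−2)/3) in ℂ[S_n], where [s_α,s_β] = s_α s_β − s_β s_α, e_{(123)} is the sum of all 3-cycles, and n(n−1)(n−2)/3 is the number of 3-cycles in S_n. -/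
/-!
A summand of `Ω′` is non-zero exactly when the positive roots `α ≠ β` share one index, and such
ordered pairs correspond bijectively to triples `(x, y, z)` of distinct indices through
`α = ±(ε_x − ε_y)`, `β = ±(ε_y − ε_z)`. Then `s_α s_β` is the 3-cycle `σ = (x y z)`,
`B(α, β) = ±1`, and `[s_α, s_β]² = (σ − σ⁻¹)² = σ + σ⁻¹ − 2` because `σ³ = 1`. Every 3-cycle comes
from the three rotations of a triple, and the three signs `B(α, β)` add up to `1`. Hence
`16 Ω′ = Σ_σ (σ + σ⁻¹ − 2) = 2 e_{(123)} − 2 N`, where `N = n(n−1)(n−2)/3` counts the 3-cycles.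
-/

noncomputable section

open scoped Classical

section Statement15

variable (n : ℕ)

/-- The commutator `[s_α, s_β] = s_α s_β − s_β s_α` in `ℂ[S_n]`, for the reflections
(transpositions) attached to the positive roots `p, q`. -/
def commSn (p q : Fin n × Fin n) : MonoidAlgebra ℂ (Equiv.Perm (Fin n)) :=
  MonoidAlgebra.single (Equiv.swap p.1 p.2 * Equiv.swap q.1 q.2) (1 : ℂ)
    - MonoidAlgebra.single (Equiv.swap q.1 q.2 * Equiv.swap p.1 p.2) (1 : ℂ)

/-- `Ω′_{S_n} = (1/16) Σ_{α,β>0, B(α,β)≠0} B(α∨,β∨)⁻¹ [s_α,s_β]²`, summed over ordered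
pairs of non-orthogonal positive roots, with all parameters equal to `1`. -/
def OmegaSnPrime : MonoidAlgebra ℂ (Equiv.Perm (Fin n)) :=
  (1 / 16 : ℂ) • ∑ p ∈ posRootsA n, ∑ q ∈ posRootsA n,
    if dotR n (rootVecA n p) (rootVecA n q) ≠ 0 then
      (((dotR n (rootVecA n p) (rootVecA n q))⁻¹ : ℝ) : ℂ) • (commSn n p q) ^ 2
    else 0

open Finset Equiv Equiv.Perm
open scoped Nat

theorem Equiv.Perm.IsThreeCycle.pow_three_eq_one {α : Type*} [Fintype α] [DecidableEq α]
    {σ : Perm α} (h : σ.IsThreeCycle) : σ ^ 3 = 1 :=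
  h.orderOf ▸ pow_orderOf_eq_one σ

theorem Equiv.Perm.card_isThreeCycle_mul {α : Type*} [Fintype α] [DecidableEq α]
    (h : 3 ≤ Fintype.card α) :
    #(univ.filter fun σ : Perm α => σ.IsThreeCycle) * (3 * (Fintype.card α - 3)!) =
      (Fintype.card α)! := by
  have := card_of_cycleType_mul_eq α {3}
  simp only [Multiset.sum_singleton, Multiset.prod_singleton, Multiset.toFinset_singleton,
    Multiset.count_singleton_self, prod_singleton, Nat.factorial_one, mul_one,
    Multiset.mem_singleton, forall_eq, Nat.reduceLeDiff, and_true, if_pos h] at this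
  rw [mul_comm 3]
  convert this using 4
  exact Iff.rfl

theorem MonoidAlgebra.single_sub_single_inv_sq {k G : Type*} [CommRing k] [Group G] {g : G}
    (hg : g ^ 3 = 1) :
    (single g (1 : k) - single g⁻¹ 1) ^ 2 = single g 1 + single g⁻¹ 1 - 2 := by
  have hgg : g * g = g⁻¹ := by rw [eq_inv_iff_mul_eq_one, ← pow_three', hg]
  have hgg' : g⁻¹ * g⁻¹ = g := by rw [← mul_inv_rev, hgg, inv_inv]
  rw [sq]
  simp only [sub_mul, mul_sub, single_mul_single, hgg, hgg', mul_inv_cancel, inv_mul_cancel,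
    mul_one, ← one_def]
  rw [← one_add_one_eq_two]
  abel

section Triples

variable {α : Type*} [Fintype α] [DecidableEq α]

variable (α) in
def distinctTriples : Finset (α × α × α) :=
  univ.filter fun t => t.1 ≠ t.2.1 ∧ t.1 ≠ t.2.2 ∧ t.2.1 ≠ t.2.2

def tripleCycle (t : α × α × α) : Perm α := swap t.1 t.2.1 * swap t.2.1 t.2.2

theorem isThreeCycle_tripleCycle {t : α × α × α} (ht : t ∈ distinctTriples α) :
    (tripleCycle t).IsThreeCycle := by
  obtain ⟨x, y, z⟩ := t
  simp only [distinctTriples, mem_filter, mem_univ, true_and] at ht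
  simp only [tripleCycle]
  rw [swap_comm]
  exact isThreeCycle_swap_mul_swap_same (Ne.symm ht.1) ht.2.2 ht.2.1

theorem filter_tripleCycle_eq {σ : Perm α} (hσ : σ.IsThreeCycle) :
    (distinctTriples α).filter (tripleCycle · = σ) =
      σ.support.image fun x => (x, σ x, σ (σ x)) := by
  ext ⟨x, y, z⟩
  simp only [distinctTriples, mem_filter, mem_univ, true_and, mem_image, Prod.mk.injEq]
  constructor
  · rintro ⟨⟨hxy, hxz, hyz⟩, rfl⟩
    have hx : tripleCycle (x, y, z) x = y := by
      simp [tripleCycle, swap_apply_of_ne_of_ne hxy hxz]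
    have hy : tripleCycle (x, y, z) y = z := by
      simp [tripleCycle, swap_apply_of_ne_of_ne hxz.symm hyz.symm]
    exact ⟨x, mem_support.2 (by rw [hx]; exact hxy.symm), rfl, hx, by rw [hx, hy]⟩
  · rintro ⟨w, hw, rfl, rfl, rfl⟩
    have hnd := hσ.nodup_iff_mem_support.2 hw
    simp only [List.nodup_cons, List.mem_cons, List.not_mem_nil, or_false, not_or] at hnd
    exact ⟨⟨hnd.1.1, hnd.1.2, hnd.2.1⟩, (hσ.eq_swap_mul_swap_iff_mem_support.2 hw).symm⟩

theorem sum_distinctTriples_eq_sum_support {M : Type*} [AddCommMonoid M] (f : α × α × α → M) :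
    ∑ t ∈ distinctTriples α, f t =
      ∑ σ ∈ univ.filter (fun σ : Perm α => σ.IsThreeCycle),
        ∑ x ∈ σ.support, f (x, σ x, σ (σ x)) := by
  rw [← sum_fiberwise_of_maps_to (g := tripleCycle)
    (fun t ht => mem_filter.2 ⟨mem_univ _, isThreeCycle_tripleCycle ht⟩)]
  refine sum_congr rfl fun σ hσ => ?_
  rw [filter_tripleCycle_eq (mem_filter.1 hσ).2, sum_image]
  intro x _ y _ h
  exact congrArg Prod.fst h

end Triples

section Orientation

variable {α : Type*} [LinearOrder α]

def orient (x y : α) : ℤ := if x < y then 1 else -1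

def tripleSign (t : α × α × α) : ℤ := -(orient t.1 t.2.1 * orient t.2.1 t.2.2)

theorem tripleSign_eq_one_or_neg_one (t : α × α × α) :
    tripleSign t = 1 ∨ tripleSign t = -1 := by
  unfold tripleSign orient
  split_ifs <;> simp

theorem tripleSign_add_rotate {x y z : α} (hxy : x ≠ y) :
    tripleSign (x, y, z) + tripleSign (y, z, x) + tripleSign (z, x, y) = 1 := by
  unfold tripleSign orient
  split_ifs <;> first | (exfalso; order) | norm_num

theorem sum_tripleSign_smul [Fintype α] {M : Type*} [AddCommGroup M] (f : Perm α → M) :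
    ∑ t ∈ distinctTriples α, tripleSign t • f (tripleCycle t) =
      ∑ σ ∈ univ.filter (fun σ : Perm α => σ.IsThreeCycle), f σ := by
  rw [sum_distinctTriples_eq_sum_support]
  refine sum_congr rfl fun σ hσ => ?_
  have h : σ.IsThreeCycle := (mem_filter.1 hσ).2
  obtain ⟨x, hx⟩ := card_pos.1 (h.card_support ▸ three_pos : 0 < #σ.support)
  have hσ3 : σ (σ (σ x)) = x := by
    simpa [pow_succ] using congrArg (· x) h.pow_three_eq_one
  calc ∑ y ∈ σ.support, tripleSign (y, σ y, σ (σ y)) • f (tripleCycle (y, σ y, σ (σ y)))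
      = (∑ y ∈ σ.support, tripleSign (y, σ y, σ (σ y))) • f σ := by
        rw [sum_smul]
        refine sum_congr rfl fun y hy => ?_
        rw [tripleCycle, ← h.eq_swap_mul_swap_iff_mem_support.2 hy]
    _ = f σ := by
        rw [h.support_eq_iff_mem_support.2 hx,
          show ({x, σ x, σ (σ x)} : Finset α) = [x, σ x, σ (σ x)].toFinset by simp,
          List.sum_toFinset _ (h.nodup_iff_mem_support.2 hx)]
        simp only [List.map_cons, List.map_nil, List.sum_cons, List.sum_nil, add_zero, hσ3,
          ← add_assoc]
        rw [tripleSign_add_rotate (mem_support.1 hx).symm, one_smul]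

def sortPair (x y : α) : α × α := (min x y, max x y)

theorem swap_sortPair [DecidableEq α] (x y : α) :
    swap (sortPair x y).1 (sortPair x y).2 = swap x y := by
  rcases le_total x y with h | h
  · simp [sortPair, h]
  · simp [sortPair, h, swap_comm]

theorem sortPair_injOn [Fintype α] :
    Set.InjOn (fun t : α × α × α => (sortPair t.1 t.2.1, sortPair t.2.1 t.2.2))
      (distinctTriples α) := by
  rintro ⟨x, y, z⟩ ht ⟨x', y', z'⟩ ht' h
  simp only [distinctTriples, coe_filter, mem_univ, true_and, Set.mem_ofPred_eq] at ht ht'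
  simp only [sortPair, Prod.mk.injEq] at h ⊢
  grind

end Orientation

section Roots

variable {n : ℕ}

theorem sortPair_mem_posRootsA {x y : Fin n} (h : x ≠ y) : sortPair x y ∈ posRootsA n := by
  simpa [sortPair, posRootsA] using h.symm

theorem exists_sortPair_eq {a b c d : Fin n} (hab : a < b) (hcd : c < d)
    (hne : (a, b) ≠ (c, d)) (hmeet : c = a ∨ d = a ∨ c = b ∨ d = b) :
    ∃ t ∈ distinctTriples (Fin n),
      (sortPair t.1 t.2.1, sortPair t.2.1 t.2.2) = ((a, b), (c, d)) := by
  simp only [distinctTriples, mem_filter, mem_univ, true_and, sortPair, Prod.mk.injEq,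
    Prod.exists]
  rcases hmeet with rfl | rfl | rfl | rfl
  · exact ⟨b, c, d, by grind⟩
  · exact ⟨b, d, c, by grind⟩
  · exact ⟨a, c, d, by grind⟩
  · exact ⟨a, d, c, by grind⟩

theorem dotR_smul_left (c : ℝ) (u v : Fin n → ℝ) : dotR n (c • u) v = c * dotR n u v := by
  simp [dotR, mul_sum, mul_assoc]

theorem dotR_smul_right (c : ℝ) (u v : Fin n → ℝ) : dotR n u (c • v) = c * dotR n u v := by
  simp [dotR, mul_sum, mul_left_comm]

theorem dotR_rootVecA (p q : Fin n × Fin n) :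
    dotR n (rootVecA n p) (rootVecA n q) =
      (if q.1 = p.1 then 1 else 0) - (if q.2 = p.1 then 1 else 0)
        - (if q.1 = p.2 then 1 else 0) + (if q.2 = p.2 then 1 else 0) := by
  simp only [dotR, rootVecA, Pi.sub_apply, Pi.single_apply, mul_sub, sum_sub_distrib, mul_ite,
    mul_one, mul_zero, sum_ite_eq', mem_univ, if_true]
  ring

theorem rootVecA_sortPair (x y : Fin n) :
    rootVecA n (sortPair x y) = (orient x y : ℝ) • rootVecA n (x, y) := by
  unfold sortPair orient rootVecA
  split_ifs with h
  · simp [min_eq_left h.le, max_eq_right h.le]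
  · simp [min_eq_right (not_lt.1 h), max_eq_left (not_lt.1 h)]

theorem dotR_rootVecA_sortPair {t : Fin n × Fin n × Fin n} (ht : t ∈ distinctTriples (Fin n)) :
    dotR n (rootVecA n (sortPair t.1 t.2.1)) (rootVecA n (sortPair t.2.1 t.2.2)) =
      tripleSign t := by
  obtain ⟨x, y, z⟩ := t
  simp only [distinctTriples, mem_filter, mem_univ, true_and] at ht
  obtain ⟨hxy, hxz, hyz⟩ := ht
  rw [rootVecA_sortPair, rootVecA_sortPair, dotR_smul_left, dotR_smul_right, dotR_rootVecA]
  simp [tripleSign, hxy.symm, hxz.symm, hyz.symm]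

theorem commSn_sortPair (t : Fin n × Fin n × Fin n) :
    commSn n (sortPair t.1 t.2.1) (sortPair t.2.1 t.2.2) =
      MonoidAlgebra.single (tripleCycle t) 1 - MonoidAlgebra.single (tripleCycle t)⁻¹ 1 := by
  simp [commSn, swap_sortPair, tripleCycle, mul_inv_rev]

def omegaTerm (p q : Fin n × Fin n) : MonoidAlgebra ℂ (Perm (Fin n)) :=
  if dotR n (rootVecA n p) (rootVecA n q) ≠ 0 then
    (((dotR n (rootVecA n p) (rootVecA n q))⁻¹ : ℝ) : ℂ) • (commSn n p q) ^ 2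
  else 0

theorem omegaTerm_sortPair {t : Fin n × Fin n × Fin n} (ht : t ∈ distinctTriples (Fin n)) :
    omegaTerm (sortPair t.1 t.2.1) (sortPair t.2.1 t.2.2) = tripleSign t •
      (MonoidAlgebra.single (tripleCycle t) 1 - MonoidAlgebra.single (tripleCycle t)⁻¹ 1) ^ 2 := by
  rw [omegaTerm, dotR_rootVecA_sortPair ht, commSn_sortPair]
  rcases tripleSign_eq_one_or_neg_one t with h | h <;> simp [h]

theorem omegaTerm_ne_zero {p q : Fin n × Fin n} (h : omegaTerm p q ≠ 0) :
    p ≠ q ∧ (q.1 = p.1 ∨ q.2 = p.1 ∨ q.1 = p.2 ∨ q.2 = p.2) := by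
  unfold omegaTerm at h
  refine ⟨?_, ?_⟩
  · rintro rfl
    simp [commSn] at h
  · by_contra! hq
    simp [dotR_rootVecA, hq] at h

theorem sum_omegaTerm :
    ∑ p ∈ posRootsA n, ∑ q ∈ posRootsA n, omegaTerm p q =
      ∑ t ∈ distinctTriples (Fin n), tripleSign t •
        (MonoidAlgebra.single (tripleCycle t) (1 : ℂ)
          - MonoidAlgebra.single (tripleCycle t)⁻¹ 1) ^ 2 := by
  rw [← sum_product', ← sum_congr rfl fun t ht => omegaTerm_sortPair ht]
  have himage := sum_image (f := fun pq : (Fin n × Fin n) × (Fin n × Fin n) => omegaTerm pq.1 pq.2)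
    sortPair_injOn
  dsimp only at himage
  rw [← himage]
  refine (sum_subset (fun pq hpq => ?_) (fun pq hpq hnot => ?_)).symm
  · obtain ⟨t, ht, rfl⟩ := mem_image.1 hpq
    simp only [distinctTriples, mem_filter, mem_univ, true_and] at ht
    exact mem_product.2 ⟨sortPair_mem_posRootsA ht.1, sortPair_mem_posRootsA ht.2.2⟩
  · by_contra h
    obtain ⟨⟨a, b⟩, ⟨c, d⟩⟩ := pq
    obtain ⟨hne, hmeet⟩ := omegaTerm_ne_zero h
    simp only [mem_product, posRootsA, mem_filter, mem_univ, true_and] at hpq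
    exact hnot (mem_image.2 (exists_sortPair_eq hpq.1 hpq.2 hne hmeet))

theorem card_isThreeCycle_fin (hn : 3 ≤ n) :
    (#(univ.filter fun σ : Perm (Fin n) => σ.IsThreeCycle) : ℂ) = n * (n - 1) * (n - 2) / 3 := by
  have h := card_isThreeCycle_mul (α := Fin n) (by simpa using hn)
  obtain ⟨k, rfl⟩ := Nat.exists_eq_add_of_le' hn
  simp only [Fintype.card_fin, Nat.add_sub_cancel, Nat.factorial_succ] at h
  have hk : (k ! : ℂ) ≠ 0 := by exact_mod_cast k.factorial_ne_zero
  rw [eq_div_iff three_ne_zero]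
  apply mul_right_cancel₀ hk
  have h' := congrArg (Nat.cast : ℕ → ℂ) h
  push_cast at h' ⊢
  linear_combination h'

theorem sum_single_inv_isThreeCycle :
    ∑ σ ∈ univ.filter (fun σ : Perm (Fin n) => σ.IsThreeCycle), MonoidAlgebra.single σ⁻¹ (1 : ℂ) =
      threeCycleSum n :=
  sum_equiv (Equiv.inv _) (by simp [IsThreeCycle.inv_iff]) (by simp)

end Roots

/-- `Ω′_{S_n} = (1/8)(e_{(123)} − n(n−1)(n−2)/3)`. -/
theorem statement15 (hn : 3 ≤ n) :
    OmegaSnPrime n = (1 / 8 : ℂ) •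
      (threeCycleSum n - (((n : ℂ) * ((n : ℂ) - 1) * ((n : ℂ) - 2)) / 3) •
        (1 : MonoidAlgebra ℂ (Equiv.Perm (Fin n)))) := by
  have hsum : ∑ p ∈ posRootsA n, ∑ q ∈ posRootsA n, omegaTerm p q =
      ∑ σ ∈ univ.filter (fun σ : Perm (Fin n) => σ.IsThreeCycle),
        (MonoidAlgebra.single σ 1 + MonoidAlgebra.single σ⁻¹ 1 - 2) := by
    rw [sum_omegaTerm, sum_tripleSign_smul fun σ =>
      (MonoidAlgebra.single σ (1 : ℂ) - MonoidAlgebra.single σ⁻¹ 1) ^ 2]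
    exact sum_congr rfl fun σ hσ =>
      MonoidAlgebra.single_sub_single_inv_sq (mem_filter.1 hσ).2.pow_three_eq_one
  have htwo : (2 : MonoidAlgebra ℂ (Perm (Fin n))) = (2 : ℂ) • 1 := by
    rw [two_smul, one_add_one_eq_two]
  rw [← card_isThreeCycle_fin hn, OmegaSnPrime]
  change (1 / 16 : ℂ) • ∑ p ∈ posRootsA n, ∑ q ∈ posRootsA n, omegaTerm p q = _
  rw [hsum, sum_sub_distrib, sum_add_distrib, sum_single_inv_isThreeCycle, sum_const, htwo,
    ← Nat.cast_smul_eq_nsmul ℂ, ← threeCycleSum]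
  module

end Statement15

end
end
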